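/- arXiv:1211.3356 — 10 statements merged into one kernel-verified Lean document; each statement's English description precedes it below -/
import Mathlib

section
/- Let (X,d) be a metric vector space with translation-invariant metric. If X is finite-dimensional and {A_n} is a chain A_0 ⊆ A_1 ⊆ … ⊆ X of subsets satisfying (A1) there is K:ℕ→ℕ with K(n) ≥ n and A_n + A_n ⊆ A_{K(n)}, (A2) λA_n ⊆ A_n for all scalars λ, and (A3) ⋃_n A_n is dense in X, then there exists N ∈ ℕ such that A_N = X. -/
open Pointwise

/-!
Finite-dimensional subspaces of a Hausdorff topological vector space are closed, so the dense
set `⋃ n, A n` spans the whole space, and already a finite subset `t` of it does. Since the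
chain is increasing, `t` lies in a single `A N`. Every vector is then a combination
`∑ cᵢ • tᵢ` of at most `#t` terms; each `cᵢ • tᵢ` stays in `A N`, and each of the `#t`
additions moves one step along `n ↦ K n`, so every vector lies in `A (K^[#t] N)`.
-/

theorem Submodule.span_eq_top_of_dense {𝕜 E : Type*} [NontriviallyNormedField 𝕜]
    [CompleteSpace 𝕜] [AddCommGroup E] [TopologicalSpace E] [T2Space E]
    [IsTopologicalAddGroup E] [Module 𝕜 E] [ContinuousSMul 𝕜 E] [FiniteDimensional 𝕜 E]
    {s : Set E} (hs : Dense s) : span 𝕜 s = ⊤ := by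
  have hclosure : closure s ⊆ span 𝕜 s :=
    (span 𝕜 s).closed_of_finiteDimensional.closure_subset_iff.mpr subset_span
  rw [hs.closure_eq] at hclosure
  exact eq_top_iff'.mpr fun x => hclosure (Set.mem_univ x)

theorem exists_finset_subset_span_eq (K : Type*) {V : Type*} [DivisionRing K] [AddCommGroup V]
    [Module K V] [FiniteDimensional K V] (s : Set V) :
    ∃ t : Finset V, ↑t ⊆ s ∧ Submodule.span K (t : Set V) = Submodule.span K s := by
  obtain ⟨b, hbs, hspan, hli⟩ := exists_linearIndependent K s
  refine ⟨hli.setFinite.toFinset, ?_, ?_⟩ <;> simpa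

section ApproximationScheme

variable {R X : Type*} [Semiring R] [AddCommMonoid X] [Module R X]

theorem zero_mem_of_smul_subset {s : Set X} (hsmul : ∀ c : R, c • s ⊆ s) (hs : s.Nonempty) :
    (0 : X) ∈ s := by
  obtain ⟨x, hx⟩ := hs
  simpa using hsmul 0 (Set.smul_mem_smul_set hx)

theorem span_finset_subset_iterate {A : ℕ → Set X} {K : ℕ → ℕ} (hA : Monotone A)
    (hK : ∀ n, n ≤ K n) (hadd : ∀ n, A n + A n ⊆ A (K n)) {m : ℕ}
    (hsmul : ∀ c : R, c • A m ⊆ A m) (h0 : (0 : X) ∈ A m) (t : Finset X) (ht : ↑t ⊆ A m) :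
    (Submodule.span R (t : Set X) : Set X) ⊆ A (K^[t.card] m) := by
  classical
  induction t using Finset.induction_on with
  | empty => simpa using h0
  | insert a t ha ih =>
    intro x hx
    rw [Finset.coe_insert] at ht hx
    rw [Set.insert_subset_iff] at ht
    obtain ⟨c, z, hz, rfl⟩ := Submodule.mem_span_insert.mp hx
    have hca : c • a ∈ A (K^[t.card] m) :=
      hA (Function.id_le_iterate_of_id_le hK _ m) (hsmul c (Set.smul_mem_smul_set ht.1))
    rw [Finset.card_insert_of_notMem ha, Function.iterate_succ_apply']
    exact hadd _ (Set.add_mem_add hca (ih ht.2 hz))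

end ApproximationScheme

theorem approximation_scheme_finite_dimensional_stabilizes_general
    {X : Type*} [AddCommGroup X] [Module ℝ X] [MetricSpace X]
    [IsTopologicalAddGroup X] [ContinuousSMul ℝ X] [FiniteDimensional ℝ X]
    (A : ℕ → Set X) (hchain : ∀ n, A n ⊆ A (n + 1))
    (K : ℕ → ℕ) (hK : ∀ n, n ≤ K n) (hA1 : ∀ n, A n + A n ⊆ A (K n))
    (hA2 : ∀ (n : ℕ) (c : ℝ), c • A n ⊆ A n)
    (hA3 : Dense (⋃ n, A n)) :
    ∃ N : ℕ, A N = Set.univ := by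
  have hA : Monotone A := monotone_nat_of_le_succ hchain
  obtain ⟨t, htA, hspan⟩ := exists_finset_subset_span_eq ℝ (⋃ n, A n)
  rw [Submodule.span_eq_top_of_dense hA3] at hspan
  obtain ⟨n₁, ht⟩ := hA.directed_le.exists_mem_subset_of_finset_subset_biUnion htA
  obtain ⟨x, hx⟩ := hA3.nonempty
  obtain ⟨n₀, hx⟩ := Set.mem_iUnion.mp hx
  have h0 : (0 : X) ∈ A (max n₀ n₁) :=
    zero_mem_of_smul_subset (hA2 _) ⟨x, hA (le_max_left _ _) hx⟩
  refine ⟨K^[t.card] (max n₀ n₁), Set.eq_univ_of_forall fun y => ?_⟩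
  refine span_finset_subset_iterate hA hK hA1 (hA2 _) h0 t (ht.trans (hA (le_max_right _ _))) ?_
  simp [hspan]

/-- In a finite-dimensional metric vector space (TVS with
translation-invariant metric), any approximation scheme stabilizes: some `A N = X`. -/
theorem approximation_scheme_finite_dimensional_stabilizes
    {X : Type*} [AddCommGroup X] [Module ℝ X] [MetricSpace X]
    [IsTopologicalAddGroup X] [ContinuousSMul ℝ X] [FiniteDimensional ℝ X]
    (hinv : ∀ x y z : X, dist (x + z) (y + z) = dist x y)
    (A : ℕ → Set X) (hchain : ∀ n, A n ⊆ A (n + 1))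
    (K : ℕ → ℕ) (hK : ∀ n, n ≤ K n) (hA1 : ∀ n, A n + A n ⊆ A (K n))
    (hA2 : ∀ (n : ℕ) (c : ℝ), c • A n ⊆ A n)
    (hA3 : Dense (⋃ n, A n)) :
    ∃ N : ℕ, A N = Set.univ :=
  approximation_scheme_finite_dimensional_stabilizes_general A hchain K hK hA1 hA2 hA3
end

section
/- Given a sequence {ε_n} of nonnegative reals decreasing to 0 and an increasing sequence h:ℕ→ℕ of natural numbers with n ≤ h(n) for all n, there exists a sequence {ξ_n} decreasing to 0 such that ε_n ≤ ξ_n and ξ_n ≤ 2 ξ_{h(n)} for all n. -/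
/-!
Take `ξ m = sup {ε n / 2 ^ k | m ≤ h^[k] n}`. The term `n = m, k = 0` gives `ε ≤ ξ`; raising `k`
by one turns a term of `ξ m` into half a term of `ξ (h m)`, since `h` is monotone. Finally, if `m`
exceeds the finitely many values `h^[k] n` with `n < N`, `k < K`, every term of `ξ m` is at most
`max (ε N) (ε 0 / 2 ^ K)`, so `ξ → 0`.
-/

open Filter

def dominatingTerms (ε : ℕ → ℝ) (h : ℕ → ℕ) (c : ℝ) (m : ℕ) : Set ℝ :=
  (fun p : ℕ × ℕ => ε p.1 / c ^ p.2) '' {p | m ≤ h^[p.2] p.1}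

noncomputable def dominatingSeq (ε : ℕ → ℝ) (h : ℕ → ℕ) (c : ℝ) (m : ℕ) : ℝ :=
  sSup (dominatingTerms ε h c m)

section

variable {ε : ℕ → ℝ} {h : ℕ → ℕ} {c : ℝ}

theorem self_mem_dominatingTerms (m : ℕ) : ε m ∈ dominatingTerms ε h c m :=
  ⟨(m, 0), by simp, by simp⟩

theorem bddAbove_dominatingTerms (hnonneg : ∀ n, 0 ≤ ε n) (hanti : Antitone ε) (hc : 1 ≤ c)
    (m : ℕ) : BddAbove (dominatingTerms ε h c m) := by
  refine ⟨ε 0, Set.forall_mem_image.2 fun p _ => ?_⟩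
  exact (div_le_self (hnonneg p.1) (one_le_pow₀ hc)).trans (hanti (Nat.zero_le _))

theorem le_dominatingSeq (hnonneg : ∀ n, 0 ≤ ε n) (hanti : Antitone ε) (hc : 1 ≤ c) (m : ℕ) :
    ε m ≤ dominatingSeq ε h c m :=
  le_csSup (bddAbove_dominatingTerms hnonneg hanti hc m) (self_mem_dominatingTerms m)

theorem dominatingSeq_nonneg (hnonneg : ∀ n, 0 ≤ ε n) (hanti : Antitone ε) (hc : 1 ≤ c) (m : ℕ) :
    0 ≤ dominatingSeq ε h c m :=
  (hnonneg m).trans (le_dominatingSeq hnonneg hanti hc m)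

theorem antitone_dominatingSeq (hnonneg : ∀ n, 0 ≤ ε n) (hanti : Antitone ε) (hc : 1 ≤ c) :
    Antitone (dominatingSeq ε h c) := fun a b hab =>
  csSup_le_csSup (bddAbove_dominatingTerms hnonneg hanti hc a) ⟨_, self_mem_dominatingTerms b⟩ <|
    Set.image_mono fun _ hp => hab.trans hp

theorem dominatingSeq_le_mul_apply (hnonneg : ∀ n, 0 ≤ ε n) (hanti : Antitone ε) (hc : 1 ≤ c)
    (hmono : Monotone h) (m : ℕ) :
    dominatingSeq ε h c m ≤ c * dominatingSeq ε h c (h m) := by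
  have hc₀ : 0 < c := zero_lt_one.trans_le hc
  refine csSup_le ⟨_, self_mem_dominatingTerms m⟩ (Set.forall_mem_image.2 fun p hp => ?_)
  have hshift : ε p.1 / c ^ (p.2 + 1) ≤ dominatingSeq ε h c (h m) := by
    refine le_csSup (bddAbove_dominatingTerms hnonneg hanti hc (h m)) ⟨(p.1, p.2 + 1), ?_, rfl⟩
    simpa only [Set.mem_ofPred_eq, Function.iterate_succ_apply'] using hmono hp
  calc ε p.1 / c ^ p.2 = c * (ε p.1 / c ^ (p.2 + 1)) := by field_simp; ring
    _ ≤ c * dominatingSeq ε h c (h m) := by gcongr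

theorem eventually_dominatingSeq_le_max (hnonneg : ∀ n, 0 ≤ ε n) (hanti : Antitone ε) (hc : 1 ≤ c)
    (N K : ℕ) : ∀ᶠ m in atTop, dominatingSeq ε h c m ≤ max (ε N) (ε 0 / c ^ K) := by
  have hbeyond : ∀ᶠ m in atTop, ∀ n < N, ∀ k < K, h^[k] n < m :=
    (eventually_all_finite (Set.finite_lt_nat N)).2 fun n _ =>
      (eventually_all_finite (Set.finite_lt_nat K)).2 fun k _ => eventually_gt_atTop _
  filter_upwards [hbeyond] with m hm
  refine csSup_le ⟨_, self_mem_dominatingTerms m⟩ (Set.forall_mem_image.2 fun p hp => ?_)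
  obtain ⟨n, k⟩ := p
  rcases le_or_gt N n with hNn | hnN
  · exact le_max_of_le_left <| (div_le_self (hnonneg n) (one_le_pow₀ hc)).trans (hanti hNn)
  rcases le_or_gt K k with hKk | hkK
  · exact le_max_of_le_right <| div_le_div₀ (hnonneg 0) (hanti (Nat.zero_le n)) (by positivity)
      (pow_le_pow_right₀ hc hKk)
  · exact absurd hp (hm n hnN k hkK).not_ge

theorem tendsto_dominatingSeq_zero (hnonneg : ∀ n, 0 ≤ ε n) (hanti : Antitone ε)
    (hlim : Tendsto ε atTop (nhds 0)) (hc : 1 < c) :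
    Tendsto (dominatingSeq ε h c) atTop (nhds 0) := by
  refine tendsto_order.2 ⟨fun a ha => Eventually.of_forall fun m =>
    ha.trans_le (dominatingSeq_nonneg hnonneg hanti hc.le m), fun δ hδ => ?_⟩
  obtain ⟨N, hN⟩ := (hlim.eventually (gt_mem_nhds hδ)).exists
  have hgeom : Tendsto (fun K => ε 0 / c ^ K) atTop (nhds 0) :=
    tendsto_const_nhds.div_atTop (tendsto_pow_atTop_atTop_of_one_lt hc)
  obtain ⟨K, hK⟩ := (hgeom.eventually (gt_mem_nhds hδ)).exists
  filter_upwards [eventually_dominatingSeq_le_max hnonneg hanti hc.le N K] with m hm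
  exact hm.trans_lt (max_lt hN hK)

end

theorem exists_dominating_sequence_general (ε : ℕ → ℝ) (hnonneg : ∀ n, 0 ≤ ε n)
    (hanti : Antitone ε) (hlim : Tendsto ε atTop (nhds 0))
    (h : ℕ → ℕ) (hmono : Monotone h) :
    ∃ ξ : ℕ → ℝ, (∀ n, 0 ≤ ξ n) ∧ Antitone ξ ∧ Tendsto ξ atTop (nhds 0) ∧
      ∀ n, ε n ≤ ξ n ∧ ξ n ≤ 2 * ξ (h n) := by
  have h2 : (1 : ℝ) ≤ 2 := one_le_two
  exact ⟨dominatingSeq ε h 2, dominatingSeq_nonneg hnonneg hanti h2,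
    antitone_dominatingSeq hnonneg hanti h2,
    tendsto_dominatingSeq_zero hnonneg hanti hlim one_lt_two,
    fun n => ⟨le_dominatingSeq hnonneg hanti h2 n,
      dominatingSeq_le_mul_apply hnonneg hanti h2 hmono n⟩⟩

/-- Given `ε_n ↘ 0` and an increasing `h : ℕ → ℕ` with `n ≤ h n`,
there is `ξ_n ↘ 0` with `ε_n ≤ ξ_n` and `ξ_n ≤ 2 ξ_{h n}` for all `n`. -/
theorem exists_dominating_sequence (ε : ℕ → ℝ) (hnonneg : ∀ n, 0 ≤ ε n)
    (hanti : Antitone ε) (hlim : Tendsto ε atTop (nhds 0))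
    (h : ℕ → ℕ) (hmono : Monotone h) (hge : ∀ n, n ≤ h n) :
    ∃ ξ : ℕ → ℝ, (∀ n, 0 ≤ ξ n) ∧ Antitone ξ ∧ Tendsto ξ atTop (nhds 0) ∧
      ∀ n, ε n ≤ ξ n ∧ ξ n ≤ 2 * ξ (h n) :=
  exists_dominating_sequence_general ε hnonneg hanti hlim h hmono
end

section
/- Let (X,d) be a metric vector space with translation-invariant metric, M a vector subspace of X, and r > 0. Then E(B(0,r), M) = min{r, E(X,M)}, where E(B,M) = sup_{b∈B} inf_{m∈M} d(b,m) and E(X,M) = sup_{x∈X} inf_{m∈M} d(x,m). -/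
/-! `E(B(0,r), M) ≤ min r E(X,M)` because `0 ∈ M`. Conversely, for `x ∈ X` the map
`t ↦ E(t • x, M)` is continuous and vanishes at `0`, so it attains every value `c ≤ E(x, M)`.
If moreover `c < r`, pick `m ∈ M` with `d(t • x, m) < r`: then `t • x - m` lies in `B(0,r)` and,
by translation invariance, still has distance `c` from `M`. -/

open Metric ENNReal

theorem isIsometricVAdd_of_dist_add_right {X : Type*} [AddCommGroup X] [PseudoMetricSpace X]
    (hinv : ∀ x y z : X, dist (x + z) (y + z) = dist x y) : IsIsometricVAdd X X :=
  ⟨fun c => Isometry.of_dist_eq fun x y => by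
    simpa only [vadd_eq_add, add_comm c] using hinv x y c⟩

section Translation

variable {X S : Type*} [AddGroup X] [PseudoMetricSpace X] [IsIsometricVAdd X X] [SetLike S X]
  [AddSubgroupClass S X]

theorem infEDist_add_left_of_mem {s : S} {m : X} (hm : m ∈ s) (y : X) :
    infEDist (m + y) s = infEDist y s := by
  simpa only [vadd_eq_add, vadd_coe_set hm] using infEDist_vadd m y (s : Set X)

theorem exists_mem_ball_infEDist_eq (s : S) {y : X} {r : ℝ}
    (hy : infEDist y s < ENNReal.ofReal r) : ∃ b ∈ ball (0 : X) r, infEDist b s = infEDist y s := by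
  obtain ⟨m, hm, hym⟩ := infEDist_lt_iff.mp hy
  refine ⟨-m + y, ?_, infEDist_add_left_of_mem (neg_mem hm) y⟩
  have hdist : dist (-m + y) 0 = dist y m := by
    simpa only [vadd_eq_add, neg_add_cancel] using (isometry_vadd X (-m)).dist_eq y m
  rw [edist_dist] at hym
  rw [mem_ball, hdist]
  exact (ofReal_lt_ofReal_iff'.mp hym).1

end Translation

theorem exists_smul_infEDist_eq {E : Type*} [AddCommMonoid E] [Module ℝ E] [PseudoEMetricSpace E]
    [ContinuousSMul ℝ E] {s : Set E} (hs : (0 : E) ∈ s) {x : E} {c : ℝ≥0∞}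
    (hc : c ≤ infEDist x s) : ∃ t : ℝ, infEDist (t • x) s = c := by
  have hcont : Continuous fun t : ℝ => infEDist (t • x) s :=
    continuous_infEDist.comp (continuous_id.smul continuous_const)
  have hc_mem : c ∈ Set.Icc (infEDist ((0 : ℝ) • x) s) (infEDist ((1 : ℝ) • x) s) := by
    rw [zero_smul, one_smul, infEDist_zero_of_mem hs]
    exact ⟨zero_le, hc⟩
  obtain ⟨t, -, ht⟩ := intermediate_value_Icc zero_le_one hcont.continuousOn hc_mem
  exact ⟨t, ht⟩

theorem albinus_riesz_lemma_general {X : Type*} [AddCommGroup X] [Module ℝ X] [MetricSpace X]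
    [ContinuousSMul ℝ X]
    (hinv : ∀ x y z : X, dist (x + z) (y + z) = dist x y)
    (M : Submodule ℝ X) (r : ℝ) :
    (⨆ b ∈ closedBall (0 : X) r, EMetric.infEdist b (M : Set X)) =
      min (ENNReal.ofReal r) (⨆ x : X, EMetric.infEdist x (M : Set X)) := by
  have := isIsometricVAdd_of_dist_add_right hinv
  unfold EMetric.infEdist
  refine le_antisymm (iSup₂_le fun b hb => le_min ?_ (le_iSup (fun x => infEDist x M) b)) ?_
  · calc infEDist b M ≤ edist b 0 := infEDist_le_edist_of_mem M.zero_mem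
      _ ≤ ENNReal.ofReal r := by rw [edist_dist]; exact ofReal_le_ofReal (mem_closedBall.mp hb)
  · refine le_of_forall_lt_imp_le_of_dense fun c hc => ?_
    obtain ⟨x, hx⟩ := lt_iSup_iff.mp (hc.trans_le (min_le_right _ _))
    obtain ⟨t, ht⟩ := exists_smul_infEDist_eq M.zero_mem hx.le
    have htr : infEDist (t • x) M < ENNReal.ofReal r := ht ▸ hc.trans_le (min_le_left _ _)
    obtain ⟨b, hb, hbt⟩ := exists_mem_ball_infEDist_eq M htr
    rw [← ht, ← hbt]
    exact le_iSup₂_of_le b (ball_subset_closedBall hb) le_rfl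

/-- **Albinus–Riesz lemma.** In a metric vector space with
translation-invariant metric, for any vector subspace `M` and any `r > 0`,
`E(B(0,r), M) = min{r, E(X, M)}` (computed in `ℝ≥0∞` via `infEdist` so that the
possibly infinite supremum `E(X,M)` makes sense). -/
theorem albinus_riesz_lemma {X : Type*} [AddCommGroup X] [Module ℝ X] [MetricSpace X]
    [IsTopologicalAddGroup X] [ContinuousSMul ℝ X]
    (hinv : ∀ x y z : X, dist (x + z) (y + z) = dist x y)
    (M : Submodule ℝ X) (r : ℝ) (hr : 0 < r) :
    (⨆ b ∈ closedBall (0 : X) r, EMetric.infEdist b (M : Set X)) =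
      min (ENNReal.ofReal r) (⨆ x : X, EMetric.infEdist x (M : Set X)) :=
  albinus_riesz_lemma_general hinv M r
end

section
/- Let (X,d) be an F-space with non-decreasing translation-invariant metric and let {A_n} be a non-trivial linear approximation scheme on X (each A_n is a closed proper linear subspace). Then {A_n} satisfies Shapiro's theorem on X if and only if inf_{n∈ℕ} E(X,A_n) > 0. -/
/-!
A translation-invariant metric makes `X` a seminormed group with `‖x‖ = d(x, 0)`, a norm that need
not be homogeneous. If `E(X, A n) → 0`, the rate `min (E(X, A n)) 1` bounds every error
`d(x, A n)` up to the constant `max 1 ‖x‖`, so Shapiro's theorem fails. Conversely, if some rate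
`ε n → 0` bounds every error, Baire category makes the bound uniform, `d(y, A n) ≤ K ε n`, on a
ball `‖y‖ < ρ`. Continuity of `α ↦ d(α • x, A n)` gives, for each `0 < c < min ρ E(X, A n)`, a
point of that ball at distance exactly `c` from `A n`. Hence `c ≤ K ε n → 0`, so no such `c`
exists for all `n` at once, i.e. `inf E(X, A n) = 0`.
-/

open Filter Metric Topology
open scoped ENNReal

section Shapiro

variable {X : Type*}

/-- `E(X, S)` in the paper's notation. -/
noncomputable def approxError [PseudoMetricSpace X] (S : Set X) : ℝ≥0∞ :=
  ⨆ x, infEDist x S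

def SatisfiesShapiro [PseudoMetricSpace X] (A : ℕ → Set X) : Prop :=
  ∀ ε : ℕ → ℝ, (∀ n, 0 ≤ ε n) → Antitone ε → Tendsto ε atTop (𝓝 0) →
    ∃ x : X, ¬ ∃ C : ℝ, ∀ n, infDist x (A n) ≤ C * ε n

lemma exists_lt_infDist_of_ofReal_lt_approxError [PseudoMetricSpace X] {S : Set X}
    (hS : S.Nonempty) {c : ℝ} (hc : 0 ≤ c) (h : ENNReal.ofReal c < approxError S) :
    ∃ x, c < infDist x S := by
  obtain ⟨x, hx⟩ := lt_iSup_iff.mp h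
  exact ⟨x, (ENNReal.ofReal_lt_iff_lt_toReal hc (infEDist_ne_top hS)).mp hx⟩

variable [SeminormedAddCommGroup X]

lemma infDist_le_max_mul_min_approxError (S : AddSubgroup X) (x : X) :
    infDist x (S : Set X) ≤ max 1 ‖x‖ * (min (approxError (S : Set X)) 1).toReal := by
  rcases le_total (approxError (S : Set X)) 1 with hE | hE
  · have hEtop : approxError (S : Set X) ≠ ∞ := ne_top_of_le_ne_top ENNReal.one_ne_top hE
    rw [min_eq_left hE]
    calc infDist x S ≤ (approxError (S : Set X)).toReal :=
          ENNReal.toReal_mono hEtop (le_iSup (infEDist · (S : Set X)) x)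
      _ ≤ max 1 ‖x‖ * (approxError (S : Set X)).toReal :=
          le_mul_of_one_le_left ENNReal.toReal_nonneg (le_max_left _ _)
  · rw [min_eq_right hE, ENNReal.toReal_one, mul_one]
    calc infDist x S ≤ dist x 0 := infDist_le_dist_of_mem S.zero_mem
      _ = ‖x‖ := dist_zero_right x
      _ ≤ max 1 ‖x‖ := le_max_right _ _

lemma not_satisfiesShapiro_of_iInf_eq_zero {A : ℕ → AddSubgroup X} (hA : Monotone A)
    (h : ⨅ n, approxError (A n : Set X) = 0) : ¬ SatisfiesShapiro (A · : ℕ → Set X) := by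
  set ε : ℕ → ℝ := fun n => (min (approxError (A n : Set X)) 1).toReal
  have hE : Antitone fun n => approxError (A n : Set X) := fun n m hnm =>
    iSup_mono fun x => infEDist_anti (SetLike.coe_subset_coe.mpr (hA hnm))
  have hlim : Tendsto ε atTop (𝓝 0) := by
    have hE0 : Tendsto (fun n => approxError (A n : Set X)) atTop (𝓝 0) :=
      h ▸ tendsto_atTop_iInf hE
    have hmin := hE0.min (tendsto_const_nhds (x := (1 : ℝ≥0∞)))
    rw [min_eq_left zero_le_one] at hmin
    exact ENNReal.toReal_zero ▸ (ENNReal.tendsto_toReal ENNReal.zero_ne_top).comp hmin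
  have hanti : Antitone ε := fun n m hnm =>
    ENNReal.toReal_mono (ne_top_of_le_ne_top ENNReal.one_ne_top (min_le_right _ _))
      (min_le_min_right _ (hE hnm))
  intro hSh
  obtain ⟨x, hx⟩ := hSh ε (fun n => ENNReal.toReal_nonneg) hanti hlim
  exact hx ⟨max 1 ‖x‖, fun n => infDist_le_max_mul_min_approxError (A n) x⟩

lemma exists_ball_uniform_bound [BaireSpace X] {ι : Type*} {A : ι → AddSubgroup X}
    {ε : ι → ℝ} (hε : ∀ i, 0 ≤ ε i) (h : ∀ x, ∃ C, ∀ i, infDist x (A i : Set X) ≤ C * ε i) :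
    ∃ ρ > 0, ∃ K, ∀ y, ‖y‖ < ρ → ∀ i, infDist y (A i : Set X) ≤ K * ε i := by
  set F : ℕ → Set X := fun k => {y | ∀ i, infDist y (A i : Set X) ≤ k * ε i}
  have hF : ∀ k, IsClosed (F k) := fun k => by
    simp only [F, Set.ofPred_forall]
    exact isClosed_iInter fun i => isClosed_le (continuous_infDist_pt _) continuous_const
  have hcover : ⋃ k, F k = Set.univ := Set.eq_univ_of_forall fun x => by
    obtain ⟨C, hC⟩ := h x
    exact Set.mem_iUnion.mpr ⟨⌈C⌉₊, fun i =>
      (hC i).trans (mul_le_mul_of_nonneg_right (Nat.le_ceil C) (hε i))⟩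
  obtain ⟨k, x₀, hx₀⟩ := nonempty_interior_of_iUnion_of_closed hF hcover
  obtain ⟨ρ, hρ, hball⟩ := Metric.mem_nhds_iff.mp (mem_interior_iff_mem_nhds.mp hx₀)
  refine ⟨ρ, hρ, 2 * k, fun y hy i => ?_⟩
  have hx₀y : x₀ + y ∈ ball x₀ ρ := by simpa [mem_ball, dist_eq_norm] using hy
  have hsplit : infDist y (A i : Set X) ≤
      infDist (x₀ + y) (A i : Set X) + infDist x₀ (A i : Set X) := by
    simp only [← QuotientAddGroup.norm_mk]
    simpa using norm_sub_le ((x₀ + y : X) : X ⧸ A i) (x₀ : X ⧸ A i)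
  linarith [hball hx₀y i, hball (mem_ball_self hρ) i]

/-- Scale `x` continuously until its distance to `S` is exactly `c`, then subtract a near-best
approximation from `S`. -/
lemma exists_norm_lt_infDist_eq [Module ℝ X] [ContinuousSMul ℝ X] (S : AddSubgroup X)
    {x : X} {c r : ℝ} (hc : 0 ≤ c) (hcr : c < r) (hcx : c ≤ infDist x (S : Set X)) :
    ∃ z, ‖z‖ < r ∧ infDist z (S : Set X) = c := by
  have hcont : ContinuousOn (fun α : ℝ => infDist (α • x) (S : Set X)) (Set.Icc 0 1) :=
    ((continuous_infDist_pt _).comp (continuous_id.smul continuous_const)).continuousOn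
  obtain ⟨α, -, hα⟩ := intermediate_value_Icc zero_le_one hcont
    ⟨by simpa [infDist_zero_of_mem S.zero_mem] using hc, by simpa using hcx⟩
  have hαx : ‖((α • x : X) : X ⧸ S)‖ = c := (QuotientAddGroup.norm_mk (S := S) _).trans hα
  obtain ⟨m, hm, hmr⟩ := QuotientAddGroup.norm_lt_iff.mp (hαx.trans_lt hcr)
  exact ⟨m, hmr, by rw [← QuotientAddGroup.norm_mk, hm, hαx]⟩

lemma satisfiesShapiro_of_iInf_pos [Module ℝ X] [ContinuousSMul ℝ X] [BaireSpace X]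
    (A : ℕ → AddSubgroup X) (h : 0 < ⨅ n, approxError (A n : Set X)) :
    SatisfiesShapiro (A · : ℕ → Set X) := by
  intro ε hε0 _ hεlim
  by_contra! hbound
  obtain ⟨ρ, hρ, K, hK⟩ := exists_ball_uniform_bound hε0 hbound
  obtain ⟨c, hc0, hc, hcE⟩ := ENNReal.lt_iff_exists_real_btwn.mp
    (lt_min h (ENNReal.ofReal_pos.mpr hρ))
  have hcpos : 0 < c := ENNReal.ofReal_pos.mp hc
  have hcρ : c < ρ := (ENNReal.ofReal_lt_ofReal_iff hρ).mp (hcE.trans_le (min_le_right _ _))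
  have hcK : ∀ n, c ≤ K * ε n := fun n => by
    obtain ⟨x, hx⟩ := exists_lt_infDist_of_ofReal_lt_approxError ⟨0, (A n).zero_mem⟩ hc0
      ((hcE.trans_le (min_le_left _ _)).trans_le (iInf_le _ n))
    obtain ⟨z, hz, hzc⟩ := exists_norm_lt_infDist_eq (A n) hc0 hcρ hx.le
    exact hzc ▸ hK z hz n
  have : c ≤ 0 := ge_of_tendsto' (by simpa using hεlim.const_mul K) hcK
  linarith

theorem satisfiesShapiro_iff_iInf_approxError_pos [Module ℝ X] [ContinuousSMul ℝ X]
    [BaireSpace X] {A : ℕ → AddSubgroup X} (hA : Monotone A) :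
    SatisfiesShapiro (A · : ℕ → Set X) ↔ 0 < ⨅ n, approxError (A n : Set X) := by
  refine ⟨fun hSh => pos_iff_ne_zero.mpr fun h0 => ?_, satisfiesShapiro_of_iInf_pos A⟩
  exact not_satisfiesShapiro_of_iInf_eq_zero hA h0 hSh

end Shapiro

theorem albinus_theorem_general {X : Type*} [AddCommGroup X] [Module ℝ X] [MetricSpace X]
    [ContinuousSMul ℝ X] [CompleteSpace X]
    (hinv : ∀ x y z : X, dist (x + z) (y + z) = dist x y)
    (A : ℕ → Submodule ℝ X)
    (hchain : ∀ n, A n < A (n + 1)) :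
    (∀ ε : ℕ → ℝ, (∀ n, 0 ≤ ε n) → Antitone ε → Tendsto ε atTop (nhds 0) →
        ∃ x : X, ¬ ∃ C : ℝ, ∀ n, infDist x (A n : Set X) ≤ C * ε n) ↔
      0 < ⨅ n : ℕ, ⨆ x : X, EMetric.infEdist x (A n : Set X) := by
  let _ : Norm X := ⟨(dist · 0)⟩
  let _ : SeminormedAddCommGroup X := .ofAddDist (fun x => dist_comm x 0) fun x y z => by
    rw [add_comm z x, add_comm z y, hinv]
  exact satisfiesShapiro_iff_iInf_approxError_pos (A := fun n => (A n).toAddSubgroup)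
    (monotone_nat_of_le_succ fun n => (hchain n).le)

/-- **Albinus's theorem.** Let `X` be an F-space with non-decreasing
translation-invariant metric and `{A_n}` a non-trivial linear approximation scheme
(closed proper subspaces, strictly increasing, with dense union). Then `{A_n}`
satisfies Shapiro's theorem on `X` iff `inf_n E(X, A_n) > 0`. -/
theorem albinus_theorem {X : Type*} [AddCommGroup X] [Module ℝ X] [MetricSpace X]
    [IsTopologicalAddGroup X] [ContinuousSMul ℝ X] [CompleteSpace X]
    (hinv : ∀ x y z : X, dist (x + z) (y + z) = dist x y)
    (hnd : ∀ (α : ℝ) (x : X), 0 ≤ α → α ≤ 1 → dist (α • x) 0 ≤ dist x 0)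
    (A : ℕ → Submodule ℝ X)
    (hclosed : ∀ n, IsClosed (A n : Set X))
    (hproper : ∀ n, A n ≠ ⊤)
    (hchain : ∀ n, A n < A (n + 1))
    (hdense : Dense (⋃ n, (A n : Set X))) :
    (∀ ε : ℕ → ℝ, (∀ n, 0 ≤ ε n) → Antitone ε → Tendsto ε atTop (nhds 0) →
        ∃ x : X, ¬ ∃ C : ℝ, ∀ n, infDist x (A n : Set X) ≤ C * ε n) ↔
      0 < ⨅ n : ℕ, ⨆ x : X, EMetric.infEdist x (A n : Set X) :=
  albinus_theorem_general hinv A hchain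
end

section
/- Let X be an F-space with non-decreasing translation-invariant metric, ‖x‖ := d(x,0), and let {X_n} be a nontrivial linear approximation scheme on X with dim X_n < ∞ for all n. Define the radius R(V) = inf_{v∈V∖{0}} sup_{t>0} ‖tv‖ for a subspace V. If R(⋃_n X_n) > 0, then inf_n E(X,X_n) > 0, and hence {X_n} satisfies Shapiro's theorem. -/
/-!
Suppose the `r`-ball of `A (m + 1)` lies within `r / 2` of `A m`. Doubling a short vector
`w₀ ∉ A m` and correcting by `A m` at each step gives vectors `wⱼ` of norm `≤ r / 2` with
`wⱼ ≡ 2ʲ • w₀` modulo `A m`; since `A m` is closed, `2⁻ʲ • wⱼ` cannot tend to `0`, so that ball is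
not von Neumann bounded. In finite dimension, normalising an unbounded sequence in the ball and
using `‖α • x‖ ≤ ‖x‖` for `α ∈ [0, 1]` yields a nonzero `ω` whose whole ray `{t • ω | t ≥ 0}`
stays in the ball, which is impossible for `r` below the radius of `⋃ n, A n`. Hence
`E(X, A m) ≥ r / 2` for all `m`. If moreover every `x` were approximated at rate `O(ε n)`,
Baire's theorem would make this rate uniform on a small ball, which again puts a small ball of
`A (m + 1)` close to `A m` once `ε m` is small.
-/

open Filter Metric Bornology Topology

theorem exists_ne_zero_forall_apply_smul_le_of_not_isBounded {F : Type*} [NormedAddCommGroup F]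
    [NormedSpace ℝ F] [FiniteDimensional ℝ F] {N : F → ℝ} (hN : Continuous N)
    (hmono : ∀ (α : ℝ) (x : F), 0 ≤ α → α ≤ 1 → N (α • x) ≤ N x) {r : ℝ}
    (h : ¬ IsBounded {x | N x ≤ r}) : ∃ ω : F, ω ≠ 0 ∧ ∀ t : ℝ, 0 ≤ t → N (t • ω) ≤ r := by
  simp only [isBounded_iff_forall_norm_le, Set.mem_ofPred_eq, not_exists, not_forall,
    not_le, exists_prop] at h
  choose x hxN hx using fun k : ℕ => h k
  have hx0 (k : ℕ) : x k ≠ 0 := norm_pos_iff.mp ((Nat.cast_nonneg k).trans_lt (hx k))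
  obtain ⟨ω, hω, φ, hφ, hlim⟩ := (isCompact_sphere (0 : F) 1).tendsto_subseq
    (x := fun k => (‖x k‖⁻¹ : ℝ) • x k) fun k => by
      rw [mem_sphere_zero_iff_norm, norm_smul, norm_inv, norm_norm,
        inv_mul_cancel₀ (norm_ne_zero_iff.mpr (hx0 k))]
  refine ⟨ω, ne_zero_of_mem_unit_sphere ⟨ω, hω⟩, fun t ht => ?_⟩
  refine le_of_tendsto (((hN.comp (continuous_const_smul t)).tendsto ω).comp hlim) ?_
  filter_upwards [(tendsto_natCast_atTop_atTop.comp hφ.tendsto_atTop).eventually_ge_atTop t]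
    with j hj
  have htx : t ≤ ‖x (φ j)‖ := hj.trans (hx (φ j)).le
  calc N (t • (‖x (φ j)‖⁻¹ : ℝ) • x (φ j)) = N ((t / ‖x (φ j)‖) • x (φ j)) := by
        rw [smul_smul, div_eq_mul_inv]
    _ ≤ N (x (φ j)) := hmono _ _ (by positivity) (div_le_one_of_le₀ htx (norm_nonneg _))
    _ ≤ r := hxN _

theorem exists_ne_zero_forall_norm_smul_le_of_not_isVonNBounded {E : Type*}
    [NormedAddCommGroup E] [Module ℝ E] [ContinuousSMul ℝ E] [FiniteDimensional ℝ E]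
    (hmono : ∀ (α : ℝ) (x : E), 0 ≤ α → α ≤ 1 → ‖α • x‖ ≤ ‖x‖) {r : ℝ}
    (h : ¬ IsVonNBounded ℝ (closedBall (0 : E) r)) :
    ∃ ω : E, ω ≠ 0 ∧ ∀ t : ℝ, 0 ≤ t → ‖t • ω‖ ≤ r := by
  let e : (Fin (Module.finrank ℝ E) → ℝ) ≃L[ℝ] E :=
    (Module.finBasis ℝ E).equivFun.symm.toContinuousLinearEquiv
  have hunb : ¬ IsBounded {y | ‖e y‖ ≤ r} := fun hB => h <| by
    rw [show {y | ‖e y‖ ≤ r} = e ⁻¹' closedBall 0 r by ext; simp,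
      ← NormedSpace.isVonNBounded_iff ℝ] at hB
    simpa [Set.image_preimage_eq _ e.surjective] using hB.image (e : _ →L[ℝ] E)
  obtain ⟨ω, hω, hray⟩ := exists_ne_zero_forall_apply_smul_le_of_not_isBounded (N := fun y => ‖e y‖)
    (by fun_prop) (fun α y hα hα1 => by simpa using hmono α (e y) hα hα1) hunb
  exact ⟨e ω, by simpa using hω, fun t ht => by simpa using hray t ht⟩

theorem not_isVonNBounded_closedBall_of_forall_exists_norm_sub_le {E : Type*}
    [NormedAddCommGroup E] [Module ℝ E] [ContinuousSMul ℝ E] {Z : Submodule ℝ E}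
    (hZ : IsClosed (Z : Set E)) (hZtop : Z ≠ ⊤) {r : ℝ} (hr : 0 < r)
    (hnear : ∀ v : E, ‖v‖ ≤ r → ∃ z ∈ Z, ‖v - z‖ ≤ r / 2) :
    ¬ IsVonNBounded ℝ (closedBall (0 : E) r) := by
  obtain ⟨y, hy⟩ := SetLike.exists_not_mem_of_ne_top Z hZtop
  obtain ⟨s, hs, hs0⟩ : ∃ s : ℝ, ‖s • y‖ ≤ r / 2 ∧ s ≠ 0 := by
    have hlim : Tendsto (fun s : ℝ => ‖s • y‖) (𝓝 0) (𝓝 0) := by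
      simpa using ((tendsto_id (x := 𝓝 (0 : ℝ))).smul_const y).norm
    have hsmall : ∀ᶠ s : ℝ in 𝓝[≠] 0, ‖s • y‖ ≤ r / 2 :=
      nhdsWithin_le_nhds (hlim.eventually_le_const (by positivity))
    exact (hsmall.and self_mem_nhdsWithin).exists
  set w₀ := s • y
  have hw₀ : w₀ ∉ Z := by rwa [Submodule.smul_mem_iff _ hs0]
  -- Doubling: `2 • w` has norm `≤ r`, so it is within `r / 2` of `Z`.
  have hdouble (j : ℕ) : ∃ w : E, ‖w‖ ≤ r / 2 ∧ (2 : ℝ) ^ j • w₀ - w ∈ Z := by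
    induction j with
    | zero => exact ⟨w₀, hs, by simp⟩
    | succ j ih =>
      obtain ⟨w, hw, hwZ⟩ := ih
      obtain ⟨z, hz, hwz⟩ := hnear (w + w) ((norm_add_le w w).trans (by linarith))
      refine ⟨w + w - z, hwz, ?_⟩
      convert Z.add_mem (Z.smul_mem 2 hwZ) hz using 1
      rw [pow_succ', mul_smul, smul_sub, two_smul ℝ w]
      abel
  choose w hw hwZ using hdouble
  intro hB
  have hlim : Tendsto (fun j => ((1 / 2 : ℝ) ^ j) • w j) atTop (𝓝 0) :=
    hB.smul_tendsto_zero (Eventually.of_forall fun j => mem_closedBall_zero_iff.mpr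
      ((hw j).trans (by linarith))) (tendsto_pow_atTop_nhds_zero_of_lt_one (by norm_num)
      (by norm_num))
  have hmem (j : ℕ) : w₀ - ((1 / 2 : ℝ) ^ j) • w j ∈ Z := by
    convert Z.smul_mem ((1 / 2 : ℝ) ^ j) (hwZ j) using 1
    rw [smul_sub, smul_smul, ← mul_pow]
    norm_num
  exact hw₀ (by simpa using hZ.mem_of_tendsto (tendsto_const_nhds.sub hlim) (.of_forall hmem))

theorem exists_ne_zero_forall_norm_smul_le_of_forall_exists_norm_sub_le {X : Type*}
    [NormedAddCommGroup X] [Module ℝ X] [ContinuousSMul ℝ X]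
    (hmono : ∀ (α : ℝ) (x : X), 0 ≤ α → α ≤ 1 → ‖α • x‖ ≤ ‖x‖)
    {Y Z : Submodule ℝ X} [FiniteDimensional ℝ Y] (hZY : Z < Y) {r : ℝ} (hr : 0 < r)
    (hnear : ∀ v ∈ Y, ‖v‖ ≤ r → ∃ z ∈ Z, ‖v - z‖ ≤ r / 2) :
    ∃ ω ∈ Y, ω ≠ 0 ∧ ∀ t : ℝ, 0 ≤ t → ‖t • ω‖ ≤ r := by
  set Z' := Z.comap Y.subtype
  have hZ'top : Z' ≠ ⊤ := by
    rw [Ne, Submodule.comap_subtype_eq_top]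
    exact hZY.not_ge
  have hnear' (v : Y) (hv : ‖v‖ ≤ r) : ∃ z ∈ Z', ‖v - z‖ ≤ r / 2 := by
    obtain ⟨z, hz, hvz⟩ := hnear v v.2 hv
    exact ⟨⟨z, hZY.le hz⟩, hz, hvz⟩
  obtain ⟨ω, hω, hray⟩ := exists_ne_zero_forall_norm_smul_le_of_not_isVonNBounded (E := Y)
    (fun α v => hmono α v)
    (not_isVonNBounded_closedBall_of_forall_exists_norm_sub_le
      Z'.closed_of_finiteDimensional hZ'top hr hnear')
  exact ⟨ω, ω.2, by simpa using hω, hray⟩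

theorem exists_forall_norm_lt_infDist_le_of_forall_infDist_le {X ι : Type*}
    [NormedAddCommGroup X] [CompleteSpace X] (A : ι → AddSubgroup X) {ε : ι → ℝ}
    (hε : ∀ n, 0 ≤ ε n) (h : ∀ x : X, ∃ C : ℝ, ∀ n, infDist x (A n) ≤ C * ε n) :
    ∃ ρ > 0, ∃ K : ℝ, ∀ v : X, ‖v‖ < ρ → ∀ n, infDist v (A n) ≤ K * ε n := by
  set F : ℕ → Set X := fun k => {x | ∀ n, infDist x (A n) ≤ k * ε n}
  have hF : ∀ k, IsClosed (F k) := fun k => by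
    simp only [F, Set.ofPred_forall]
    exact isClosed_iInter fun n => isClosed_le (continuous_infDist_pt _) continuous_const
  have hcover : ⋃ k, F k = Set.univ := Set.eq_univ_of_forall fun x => by
    obtain ⟨C, hC⟩ := h x
    exact Set.mem_iUnion.mpr ⟨⌈C⌉₊, fun n =>
      (hC n).trans (mul_le_mul_of_nonneg_right (Nat.le_ceil C) (hε n))⟩
  obtain ⟨k, x₀, hx₀⟩ := nonempty_interior_of_iUnion_of_closed hF hcover
  obtain ⟨ρ, hρ, hball⟩ := Metric.mem_nhds_iff.mp (mem_interior_iff_mem_nhds.mp hx₀)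
  refine ⟨ρ, hρ, 2 * k, fun v hv n => ?_⟩
  have hx₀v : x₀ + v ∈ F k := hball (by simpa using hv)
  calc infDist v (A n) = ‖((x₀ + v - x₀ : X) : X ⧸ A n)‖ := by
        rw [QuotientAddGroup.norm_mk, add_sub_cancel_left]
    _ ≤ ‖((x₀ + v : X) : X ⧸ A n)‖ + ‖((x₀ : X) : X ⧸ A n)‖ := by
        rw [QuotientAddGroup.mk_sub]
        exact norm_sub_le _ _
    _ ≤ k * ε n + k * ε n := by
        rw [QuotientAddGroup.norm_mk, QuotientAddGroup.norm_mk]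
        exact add_le_add (hx₀v n) (interior_subset hx₀ n)
    _ = 2 * k * ε n := by ring

noncomputable def radius {X : Type*} [EDist X] [Zero X] [SMul ℝ X] (V : Set X) : ENNReal :=
  ⨅ v ∈ {v : X | v ∈ V ∧ v ≠ 0}, ⨆ t ∈ Set.Ioi (0 : ℝ), edist (t • v) 0

theorem radius_le_of_forall_norm_smul_le {X : Type*} [NormedAddCommGroup X] [Module ℝ X]
    {V : Set X} {ω : X} (hωV : ω ∈ V) (hω : ω ≠ 0) {r : ℝ}
    (hray : ∀ t : ℝ, 0 ≤ t → ‖t • ω‖ ≤ r) : radius V ≤ ENNReal.ofReal r :=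
  iInf₂_le_of_le ω ⟨hωV, hω⟩ <| iSup₂_le fun t ht => by
    rw [edist_dist, dist_zero_right]
    exact ENNReal.ofReal_le_ofReal (hray t (le_of_lt ht))

theorem radius_pos_implies_shapiro_general {X : Type*} [AddCommGroup X] [Module ℝ X]
    [MetricSpace X] [ContinuousSMul ℝ X] [CompleteSpace X]
    (hinv : ∀ x y z : X, dist (x + z) (y + z) = dist x y)
    (hnd : ∀ (α : ℝ) (x : X), 0 ≤ α → α ≤ 1 → dist (α • x) 0 ≤ dist x 0)
    (A : ℕ → Submodule ℝ X)
    (hfin : ∀ n, FiniteDimensional ℝ (A n))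
    (hchain : ∀ n, A n < A (n + 1))
    (hradius : 0 < ⨅ v ∈ {v : X | v ∈ (⋃ n, (A n : Set X)) ∧ v ≠ 0},
        ⨆ t ∈ Set.Ioi (0 : ℝ), edist (t • v) 0) :
    (0 < ⨅ n : ℕ, ⨆ x : X, EMetric.infEdist x (A n : Set X)) ∧
      (∀ ε : ℕ → ℝ, (∀ n, 0 ≤ ε n) → Antitone ε → Tendsto ε atTop (nhds 0) →
        ∃ x : X, ¬ ∃ C : ℝ, ∀ n, infDist x (A n : Set X) ≤ C * ε n) := by
  -- `‖x‖ = d(x, 0)` is a group norm, in general not homogeneous.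
  let _ : Norm X := ⟨fun x => dist x 0⟩
  let _ : NormedAddCommGroup X := NormedAddCommGroup.ofAddDist (fun _ => dist_comm _ _)
    fun x y z => by rw [add_comm z x, add_comm z y, hinv]
  obtain ⟨r, -, hr, hrR⟩ := ENNReal.lt_iff_exists_real_btwn.mp
    (hradius : 0 < radius (⋃ n, (A n : Set X)))
  rw [ENNReal.ofReal_pos] at hr
  have hfar (m : ℕ) {r' : ℝ} (hr' : 0 < r') (hr'r : r' ≤ r)
      (hnear : ∀ v : X, ‖v‖ ≤ r' → infDist v (A m) < r' / 2) : False := by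
    obtain ⟨ω, hωA, hω, hray⟩ := exists_ne_zero_forall_norm_smul_le_of_forall_exists_norm_sub_le
      hnd (Y := A (m + 1)) (hchain m) hr' fun v _ hv => by
        obtain ⟨z, hz, hvz⟩ := (infDist_lt_iff ⟨0, (A m).zero_mem⟩).mp (hnear v hv)
        exact ⟨z, hz, (dist_eq_norm v z ▸ hvz).le⟩
    exact hrR.not_ge <| radius_le_of_forall_norm_smul_le (Set.mem_iUnion_of_mem (m + 1) hωA) hω
      fun t ht => (hray t ht).trans hr'r
  refine ⟨pos_iff_ne_zero.mpr fun h0 => ?_, fun ε hε0 _ hε => ?_⟩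
  · obtain ⟨m, hm⟩ := iInf_lt_iff.mp (h0.trans_lt (ENNReal.ofReal_pos.mpr (half_pos hr)))
    exact hfar m hr le_rfl fun v _ => ENNReal.toReal_lt_of_lt_ofReal ((le_iSup _ v).trans_lt hm)
  · by_contra! hslow
    obtain ⟨ρ, hρ, K, hK⟩ := exists_forall_norm_lt_infDist_le_of_forall_infDist_le
      (fun n => (A n).toAddSubgroup) hε0 hslow
    have hr' : 0 < min r (ρ / 2) := lt_min hr (half_pos hρ)
    obtain ⟨m, hm⟩ := ((hε.const_mul K).eventually_lt_const
      (show K * 0 < min r (ρ / 2) / 2 by simpa using half_pos hr')).exists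
    exact hfar m hr' (min_le_left _ _) fun v hv =>
      (hK v (hv.trans_lt ((min_le_right _ _).trans_lt (half_lt_self hρ))) m).trans_lt hm

/-- Let `X` be an F-space with non-decreasing translation-invariant
metric and `{X_n}` a nontrivial linear approximation scheme with `dim X_n < ∞`.
If the radius `R(⋃_n X_n) = inf_{v ≠ 0} sup_{t>0} ‖t v‖` is positive, then
`inf_n E(X, X_n) > 0` and `{X_n}` satisfies Shapiro's theorem. -/
theorem radius_pos_implies_shapiro {X : Type*} [AddCommGroup X] [Module ℝ X]
    [MetricSpace X] [IsTopologicalAddGroup X] [ContinuousSMul ℝ X] [CompleteSpace X]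
    (hinv : ∀ x y z : X, dist (x + z) (y + z) = dist x y)
    (hnd : ∀ (α : ℝ) (x : X), 0 ≤ α → α ≤ 1 → dist (α • x) 0 ≤ dist x 0)
    (A : ℕ → Submodule ℝ X)
    (hfin : ∀ n, FiniteDimensional ℝ (A n))
    (hproper : ∀ n, A n ≠ ⊤)
    (hchain : ∀ n, A n < A (n + 1))
    (hdense : Dense (⋃ n, (A n : Set X)))
    (hradius : 0 < ⨅ v ∈ {v : X | v ∈ (⋃ n, (A n : Set X)) ∧ v ≠ 0},
        ⨆ t ∈ Set.Ioi (0 : ℝ), edist (t • v) 0) :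
    (0 < ⨅ n : ℕ, ⨆ x : X, EMetric.infEdist x (A n : Set X)) ∧
      (∀ ε : ℕ → ℝ, (∀ n, 0 ≤ ε n) → Antitone ε → Tendsto ε atTop (nhds 0) →
        ∃ x : X, ¬ ∃ C : ℝ, ∀ n, infDist x (A n : Set X) ≤ C * ε n) :=
  radius_pos_implies_shapiro_general hinv hnd A hfin hchain hradius
end

section
/- Let (X,d) be an F-space with non-decreasing translation-invariant metric and {A_n} an approximation scheme on X. Suppose there exist an infinite set ℕ_0 ⊆ ℕ, a bounded set {x_n}_{n∈ℕ_0} ⊆ X, and c > 0 such that c ≤ E(x_n, A_n) for all n ∈ ℕ_0. Then {A_n} satisfies Shapiro's theorem on X. -/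
/-!
If Shapiro's theorem failed for some `ε`, every `y` would satisfy `E(y, A_n) ≤ C_y ε_n`, and
Baire's theorem would make the constant uniform, `E(y, A_n) ≤ M ε_n`, on a ball `B(y₀, r)`.
Taking differences, `E(z, A_{K n}) ≤ 2 M ε_n` on `B(0, r)`. Since `{x_n}` is bounded, each
`x_n` is `m • w` with `w ∈ B(0, r)` and `m` independent of `n`, so adding `w` to itself `m` times
gives `E(x_n, A_{K^[m] (K n')}) ≤ 2 m M ε_{n'}`, which is `< c` for large `n'`; choosing
`n ∈ ℕ₀` beyond `K^[m] (K n')` contradicts `c ≤ E(x_n, A_n)`.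
-/

open Filter Metric Pointwise
open Set

theorem infDist_image2_le_add {X Y Z : Type*} [PseudoMetricSpace X] [PseudoMetricSpace Y]
    [PseudoMetricSpace Z] {f : X → Y → Z}
    (hf : ∀ a b c d, dist (f a b) (f c d) ≤ dist a c + dist b d) (u : X) (v : Y)
    (S : Set X) (T : Set Y) :
    infDist (f u v) (image2 f S T) ≤ infDist u S + infDist v T := by
  rcases S.eq_empty_or_nonempty with rfl | hS
  · simp [infDist_nonneg]
  rcases T.eq_empty_or_nonempty with rfl | hT
  · simp [infDist_nonneg]
  refine le_of_forall_pos_lt_add fun δ hδ => ?_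
  obtain ⟨a, ha, hua⟩ := (infDist_lt_iff hS).1 (lt_add_of_pos_right (infDist u S) (half_pos hδ))
  obtain ⟨b, hb, hvb⟩ := (infDist_lt_iff hT).1 (lt_add_of_pos_right (infDist v T) (half_pos hδ))
  calc infDist (f u v) (image2 f S T) ≤ dist (f u v) (f a b) :=
        infDist_le_dist_of_mem (mem_image2_of_mem ha hb)
    _ ≤ dist u a + dist v b := hf u v a b
    _ < infDist u S + infDist v T + δ := by linarith

theorem IsIsometricVAdd.of_dist_add_right {X : Type*} [AddCommGroup X] [PseudoMetricSpace X]
    (h : ∀ x y z : X, dist (x + z) (y + z) = dist x y) : IsIsometricVAdd X X :=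
  ⟨fun a => Isometry.of_dist_eq fun y z => by simpa only [vadd_eq_add, add_comm a] using h y z a⟩

namespace IsIsometricVAdd

variable {X : Type*} [AddCommGroup X] [PseudoMetricSpace X] [IsIsometricVAdd X X]

theorem dist_add_add_le (a b c d : X) : dist (a + b) (c + d) ≤ dist a c + dist b d :=
  calc dist (a + b) (c + d) ≤ dist (a + b) (c + b) + dist (c + b) (c + d) := dist_triangle _ _ _
    _ = dist a c + dist b d := by rw [dist_add_right, dist_add_left]

theorem dist_sub_sub_le (a b c d : X) : dist (a - b) (c - d) ≤ dist a c + dist b d := by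
  simpa only [sub_eq_add_neg, dist_neg_neg] using dist_add_add_le a (-b) c (-d)

theorem infDist_sub_le_of_sub_subset {S B : Set X} (hS : S.Nonempty) (hB : S - S ⊆ B) (u v : X) :
    infDist (u - v) B ≤ infDist u S + infDist v S := by
  have hSS : (S - S).Nonempty := hS.sub hS
  calc infDist (u - v) B ≤ infDist (u - v) (S - S) := infDist_le_infDist_of_subset hB hSS
    _ ≤ infDist u S + infDist v S := by
      rw [← image2_sub]; exact infDist_image2_le_add dist_sub_sub_le u v S S

theorem infDist_le_two_mul_of_le_on_ball {S B : Set X} (hS : S.Nonempty) (hB : S - S ⊆ B)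
    {y₀ : X} {r t : ℝ} (h : ∀ y ∈ ball y₀ r, infDist y S ≤ t) {z : X} (hz : dist z 0 < r) :
    infDist z B ≤ 2 * t := by
  have hzy : z + y₀ ∈ ball y₀ r := by
    rwa [mem_ball, show dist (z + y₀) y₀ = dist z 0 by simpa using dist_add_right z 0 y₀]
  have := infDist_sub_le_of_sub_subset hS hB (z + y₀) y₀
  rw [add_sub_cancel_right] at this
  linarith [h _ hzy, h y₀ (mem_ball_self (dist_nonneg.trans_lt hz))]

theorem infDist_nsmul_le_of_add_subset {A : ℕ → Set X} {K : ℕ → ℕ} (hA : Monotone A)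
    (hK : ∀ n, n ≤ K n) (hAK : ∀ n, A n + A n ⊆ A (K n)) {n : ℕ} (h0 : (0 : X) ∈ A n)
    (m : ℕ) (z : X) : infDist (m • z) (A (K^[m] n)) ≤ m * infDist z (A n) := by
  induction m with
  | zero => simpa using infDist_le_dist_of_mem (x := (0 : X)) h0
  | succ m ih =>
    have hle : A n ⊆ A (K^[m] n) := hA (Function.id_le_iterate_of_id_le hK m n)
    have hsub : A (K^[m] n) + A n ⊆ A (K^[m + 1] n) := by
      rw [Function.iterate_succ_apply']
      exact (add_subset_add_left hle).trans (hAK _)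
    have hne : (A (K^[m] n) + A n).Nonempty := ⟨0 + 0, add_mem_add (hle h0) h0⟩
    calc infDist ((m + 1) • z) (A (K^[m + 1] n))
        ≤ infDist (m • z + z) (A (K^[m] n) + A n) := by
          rw [succ_nsmul]; exact infDist_le_infDist_of_subset hsub hne
      _ ≤ infDist (m • z) (A (K^[m] n)) + infDist z (A n) := by
          rw [← image2_add]; exact infDist_image2_le_add dist_add_add_le _ _ _ _
      _ ≤ (m + 1 : ℕ) * infDist z (A n) := by push_cast; linarith

end IsIsometricVAdd

theorem zero_mem_of_zero_smul_subset {R M : Type*} [Zero R] [Zero M] [SMulWithZero R M]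
    {S : Set M} (h : (0 : R) • S ⊆ S) (hS : S.Nonempty) : (0 : M) ∈ S :=
  h (by rw [zero_smul_set hS]; rfl)

theorem sub_subset_of_add_subset {R M : Type*} [Ring R] [AddCommGroup M] [Module R M]
    {S B : Set M} (hS : (-1 : R) • S ⊆ S) (hB : S + S ⊆ B) : S - S ⊆ B := by
  rintro _ ⟨a, ha, b, hb, rfl⟩
  simpa only [neg_one_smul, ← sub_eq_add_neg] using hB (add_mem_add ha (hS (smul_mem_smul_set hb)))

theorem smul_closedBall_zero_subset_of_le {X : Type*} [AddCommGroup X] [Module ℝ X]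
    [PseudoMetricSpace X]
    (hnd : ∀ (α : ℝ) (x : X), 0 ≤ α → α ≤ 1 → dist (α • x) 0 ≤ dist x 0)
    {α β r : ℝ} (hα : 0 ≤ α) (hαβ : α ≤ β) :
    α • closedBall (0 : X) r ⊆ β • closedBall (0 : X) r := by
  rintro _ ⟨z, hz, rfl⟩
  rcases (hα.trans hαβ).eq_or_lt with hβ | hβ
  · obtain rfl : α = β := le_antisymm hαβ (hβ ▸ hα)
    exact smul_mem_smul_set hz
  refine ⟨(α / β) • z, ?_, by simp only [smul_smul, mul_div_cancel₀ α hβ.ne']⟩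
  rw [mem_closedBall] at hz ⊢
  exact (hnd _ z (div_nonneg hα hβ.le) (div_le_one_of_le₀ hαβ hβ.le)).trans hz

theorem exists_ball_forall_le_mul_of_forall_exists {X : Type*} [PseudoMetricSpace X]
    [CompleteSpace X] [Nonempty X] {f : ℕ → X → ℝ} (hf : ∀ n, Continuous (f n))
    {ε : ℕ → ℝ} (hε : ∀ n, 0 ≤ ε n) (h : ∀ y, ∃ C, ∀ n, f n y ≤ C * ε n) :
    ∃ y₀, ∃ r > 0, ∃ M : ℝ, ∀ y ∈ ball y₀ r, ∀ n, f n y ≤ M * ε n := by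
  set F : ℕ → Set X := fun M => ⋂ n, {y | f n y ≤ M * ε n}
  have hF : ∀ M, IsClosed (F M) := fun M =>
    isClosed_iInter fun n => isClosed_le (hf n) continuous_const
  have hcover : ⋃ M, F M = univ := eq_univ_of_forall fun y => by
    obtain ⟨C, hC⟩ := h y
    exact mem_iUnion.2 ⟨⌈C⌉₊, mem_iInter.2 fun n =>
      (hC n).trans (mul_le_mul_of_nonneg_right (Nat.le_ceil C) (hε n))⟩
  obtain ⟨M, y₀, hy₀⟩ := nonempty_interior_of_iUnion_of_closed hF hcover
  obtain ⟨r, hr, hball⟩ := Metric.mem_nhds_iff.1 (mem_interior_iff_mem_nhds.1 hy₀)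
  exact ⟨y₀, r, hr, M, fun y hy => mem_iInter.1 (hball hy)⟩

theorem bounded_far_elements_implies_shapiro_general {X : Type*} [AddCommGroup X] [Module ℝ X]
    [MetricSpace X] [CompleteSpace X]
    (hinv : ∀ x y z : X, dist (x + z) (y + z) = dist x y)
    (hnd : ∀ (α : ℝ) (x : X), 0 ≤ α → α ≤ 1 → dist (α • x) 0 ≤ dist x 0)
    (A : ℕ → Set X) (hchain : ∀ n, A n ⊆ A (n + 1))
    (K : ℕ → ℕ) (hK : ∀ n, n ≤ K n) (hA1 : ∀ n, A n + A n ⊆ A (K n))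
    (hA2 : ∀ (n : ℕ) (c : ℝ), c • A n ⊆ A n)
    (N₀ : Set ℕ) (hN₀ : N₀.Infinite) (x : ℕ → X)
    (hbdd : ∀ r : ℝ, 0 < r → ∃ l : ℝ, 0 < l ∧
      ∀ n ∈ N₀, x n ∈ l • closedBall (0 : X) r)
    (c : ℝ) (hc : 0 < c) (hfar : ∀ n ∈ N₀, c ≤ infDist (x n) (A n)) :
    ∀ ε : ℕ → ℝ, (∀ n, 0 ≤ ε n) → Antitone ε → Tendsto ε atTop (nhds 0) →
      ∃ y : X, ¬ ∃ C : ℝ, ∀ n, infDist y (A n) ≤ C * ε n := by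
  intro ε hε _ hε0
  by_contra! hbound
  have : IsIsometricVAdd X X := .of_dist_add_right hinv
  have : Nonempty X := ⟨x 0⟩
  obtain ⟨y₀, r, hr, M, hM⟩ :=
    exists_ball_forall_le_mul_of_forall_exists (fun n => continuous_infDist_pt (A n)) hε hbound
  have hA : Monotone A := monotone_nat_of_le_succ hchain
  obtain ⟨l, hl, hxl⟩ := hbdd (r / 2) (half_pos hr)
  set m := ⌈l⌉₊
  obtain ⟨n₁, hn₁⟩ := hN₀.nonempty
  obtain ⟨n₂, hn₂, hn₂₁⟩ := (((hε0.const_mul (m * (2 * M))).eventually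
    (gt_mem_nhds (by simpa using hc))).and (eventually_ge_atTop n₁)).exists
  have hne₂ : (A n₂).Nonempty := Set.Nonempty.mono (hA hn₂₁) <|
    nonempty_iff_ne_empty.2 fun h => by simpa [h, hc.not_ge] using hfar n₁ hn₁
  have h0 : (0 : X) ∈ A (K n₂) := zero_mem_of_zero_smul_subset (hA2 _ 0) (hne₂.mono (hA (hK n₂)))
  obtain ⟨n, hn, hnK⟩ := hN₀.exists_gt (K^[m] (K n₂))
  obtain ⟨w, hw, hwx⟩ := smul_closedBall_zero_subset_of_le hnd hl.le (Nat.le_ceil l) (hxl n hn)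
  refine lt_irrefl c ?_
  calc c ≤ infDist (x n) (A n) := hfar n hn
    _ = infDist (m • w) (A n) := by rw [← hwx, ← Nat.cast_smul_eq_nsmul ℝ]
    _ ≤ infDist (m • w) (A (K^[m] (K n₂))) :=
      infDist_le_infDist_of_subset (hA hnK.le) ⟨0, hA (Function.id_le_iterate_of_id_le hK m _) h0⟩
    _ ≤ m * infDist w (A (K n₂)) :=
      IsIsometricVAdd.infDist_nsmul_le_of_add_subset hA hK hA1 h0 m w
    _ ≤ m * (2 * (M * ε n₂)) := by
      gcongr
      exact IsIsometricVAdd.infDist_le_two_mul_of_le_on_ball hne₂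
        (sub_subset_of_add_subset (hA2 n₂ (-1)) (hA1 n₂)) (fun y hy => hM y hy n₂)
        ((mem_closedBall.1 hw).trans_lt (half_lt_self hr))
    _ < c := by linarith

/-- Let `X` be an F-space with non-decreasing translation-invariant
metric and `{A_n}` an approximation scheme. If there are an infinite set `ℕ₀ ⊆ ℕ`,
a (topologically) bounded family `{x_n}_{n ∈ ℕ₀}` and `c > 0` with `c ≤ E(x_n, A_n)`
for all `n ∈ ℕ₀`, then `{A_n}` satisfies Shapiro's theorem on `X`. -/
theorem bounded_far_elements_implies_shapiro {X : Type*} [AddCommGroup X] [Module ℝ X]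
    [MetricSpace X] [IsTopologicalAddGroup X] [ContinuousSMul ℝ X] [CompleteSpace X]
    (hinv : ∀ x y z : X, dist (x + z) (y + z) = dist x y)
    (hnd : ∀ (α : ℝ) (x : X), 0 ≤ α → α ≤ 1 → dist (α • x) 0 ≤ dist x 0)
    (A : ℕ → Set X) (hchain : ∀ n, A n ⊆ A (n + 1))
    (K : ℕ → ℕ) (hK : ∀ n, n ≤ K n) (hA1 : ∀ n, A n + A n ⊆ A (K n))
    (hA2 : ∀ (n : ℕ) (c : ℝ), c • A n ⊆ A n)
    (hA3 : Dense (⋃ n, A n))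
    (N₀ : Set ℕ) (hN₀ : N₀.Infinite) (x : ℕ → X)
    (hbdd : ∀ r : ℝ, 0 < r → ∃ l : ℝ, 0 < l ∧
      ∀ n ∈ N₀, x n ∈ l • closedBall (0 : X) r)
    (c : ℝ) (hc : 0 < c) (hfar : ∀ n ∈ N₀, c ≤ infDist (x n) (A n)) :
    ∀ ε : ℕ → ℝ, (∀ n, 0 ≤ ε n) → Antitone ε → Tendsto ε atTop (nhds 0) →
      ∃ y : X, ¬ ∃ C : ℝ, ∀ n, infDist y (A n) ≤ C * ε n :=
  bounded_far_elements_implies_shapiro_general hinv hnd A hchain K hK hA1 hA2 N₀ hN₀ x hbdd c hc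
    hfar
end

section
/- Let s (the space of all real sequences with the Fréchet metric d({a_k},{b_k}) = Σ_k 2^{-k}|a_k - b_k|/(1+|a_k - b_k|)) and let {A_n} be any approximation scheme on s. Then {A_n} fails Shapiro's theorem uniformly: there exists a sequence δ_n ↘ 0 such that E(x,A_n) ≤ δ_n for all x ∈ s and all n. -/
/-! Truncation to the first `N` coordinates maps `{A n}` to an approximation scheme on `ℝ^N` whose
union is dense, hence spanning. A finite spanning subset lies in a single level, and the linear
combinations of its elements, having a fixed number of terms, all lie in one later level, which is
therefore all of `ℝ^N`. So some `A M` contains, for every `x`, a point agreeing with `x` on the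
first `N` coordinates, hence within Fréchet distance `2 * 2⁻¹ ^ N` of `x`. The worst-case error
`sup_x E(x, A n)` thus tends to `0`, and its upper envelope `sup_{m ≥ n}` is the required `δ`. -/

open Filter Pointwise

section Scheme

variable {R M : Type*} [Semiring R] [AddCommMonoid M] [Module R M]
  {B : ℕ → Set M} {K : ℕ → ℕ}

theorem exists_sum_mem_of_add_subset (hmono : Monotone B) (hadd : ∀ n, B n + B n ⊆ B (K n))
    {m : ℕ} (h0 : (0 : M) ∈ B m) {ι : Type*} (s : Finset ι) :
    ∃ p, ∀ f : ι → M, (∀ i ∈ s, f i ∈ B m) → ∑ i ∈ s, f i ∈ B p := by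
  induction s using Finset.cons_induction with
  | empty => exact ⟨m, fun f _ => by simpa using h0⟩
  | cons i s hi ih =>
    obtain ⟨p, hp⟩ := ih
    refine ⟨K (max m p), fun f hf => ?_⟩
    rw [Finset.sum_cons]
    exact hadd _ (Set.add_mem_add
      (hmono (le_max_left m p) (hf i (Finset.mem_cons_self i s)))
      (hmono (le_max_right m p) (hp f fun j hj => hf j (Finset.mem_cons_of_mem hj))))

theorem exists_eq_univ_of_span_eq_top [IsNoetherian R M] (hmono : Monotone B)
    (hadd : ∀ n, B n + B n ⊆ B (K n)) (hsmul : ∀ n (c : R), c • B n ⊆ B n)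
    (hne : ∃ n, (B n).Nonempty) (hspan : Submodule.span R (⋃ n, B n) = ⊤) :
    ∃ m, B m = Set.univ := by
  obtain ⟨F, hFB, hFspan⟩ := (Submodule.fg_span_iff_fg_span_finset_subset _).1
    (hspan ▸ IsNoetherian.noetherian ⊤)
  obtain ⟨m₁, hm₁⟩ := hmono.directed_le.exists_mem_subset_of_finset_subset_biUnion hFB
  obtain ⟨m₀, b, hb⟩ := hne
  set m := max m₀ m₁
  have h0 : (0 : M) ∈ B m := by
    simpa using hsmul m (0 : R) (Set.smul_mem_smul_set (hmono (le_max_left _ _) hb))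
  obtain ⟨p, hp⟩ := exists_sum_mem_of_add_subset hmono hadd h0 F
  refine ⟨p, Set.eq_univ_of_forall fun x => ?_⟩
  have hx : x ∈ Submodule.span R (F : Set M) := by rw [← hFspan, hspan]; trivial
  obtain ⟨c, -, rfl⟩ := Submodule.mem_span_finset.1 hx
  exact hp _ fun i hi => hsmul m (c i) (Set.smul_mem_smul_set (hmono (le_max_right _ _) (hm₁ hi)))

end Scheme

theorem exists_antitone_tendsto_zero_forall_le {α : Type*} {C : ℝ} (e : ℕ → α → ℝ)
    (he0 : ∀ n x, 0 ≤ e n x) (heC : ∀ n x, e n x ≤ C)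
    (he : ∀ ε > 0, ∃ M, ∀ n ≥ M, ∀ x, e n x ≤ ε) :
    ∃ δ : ℕ → ℝ, (∀ n, 0 ≤ δ n) ∧ Antitone δ ∧ Tendsto δ atTop (nhds 0) ∧
      ∀ x n, e n x ≤ δ n := by
  have hbdd : ∀ n, BddAbove (Set.range fun p : ℕ × α => e (n + p.1) p.2) :=
    fun n => ⟨C, Set.forall_mem_range.2 fun p => heC _ _⟩
  have hδ0 : ∀ n, 0 ≤ ⨆ p : ℕ × α, e (n + p.1) p.2 := fun n => Real.iSup_nonneg fun _ => he0 _ _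
  refine ⟨fun n => ⨆ p : ℕ × α, e (n + p.1) p.2, hδ0, fun n n' hn => ?_, ?_,
    fun x n => le_ciSup_of_le (hbdd n) (0, x) le_rfl⟩
  · refine Real.iSup_le (fun p => le_ciSup_of_le (hbdd n) (n' - n + p.1, p.2) ?_) (hδ0 n)
    rw [← add_assoc, Nat.add_sub_cancel' hn]
  · rw [Metric.tendsto_atTop]
    intro ε hε
    obtain ⟨M, hM⟩ := he (ε / 2) (half_pos hε)
    refine ⟨M, fun n hn => ?_⟩
    rw [Real.dist_0_eq_abs, abs_of_nonneg (hδ0 n)]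
    exact (Real.iSup_le (fun p => hM _ (by omega) _) (half_pos hε).le).trans_lt (half_lt_self hε)

noncomputable def frechetDist (x y : ℕ → ℝ) : ℝ :=
  ∑' k, (2 : ℝ)⁻¹ ^ k * (|x k - y k| / (1 + |x k - y k|))

section FrechetDist

variable {x y : ℕ → ℝ}

theorem frechetDist_term_le (x y : ℕ → ℝ) (k : ℕ) :
    (2 : ℝ)⁻¹ ^ k * (|x k - y k| / (1 + |x k - y k|)) ≤ 2⁻¹ ^ k :=
  mul_le_of_le_one_right (by positivity) ((div_le_one (by positivity)).2 (by linarith))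

theorem summable_frechetDist_term (x y : ℕ → ℝ) :
    Summable fun k => (2 : ℝ)⁻¹ ^ k * (|x k - y k| / (1 + |x k - y k|)) :=
  .of_nonneg_of_le (fun _ => by positivity) (frechetDist_term_le x y)
    (summable_geometric_of_lt_one (by norm_num) (by norm_num))

theorem frechetDist_nonneg (x y : ℕ → ℝ) : 0 ≤ frechetDist x y :=
  tsum_nonneg fun _ => by positivity

theorem frechetDist_le_of_forall_lt_eq {N : ℕ} (h : ∀ k < N, x k = y k) :
    frechetDist x y ≤ 2 * 2⁻¹ ^ N := by
  have hle : ∀ k, (2 : ℝ)⁻¹ ^ k * (|x k - y k| / (1 + |x k - y k|)) ≤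
      if N ≤ k then 2⁻¹ ^ k else 0 := fun k => by
    split_ifs with hk
    · exact frechetDist_term_le x y k
    · simp [h k (not_le.1 hk)]
  rw [← tsum_geometric_inv_two_ge]
  refine (summable_frechetDist_term x y).tsum_le_tsum hle (.of_nonneg_of_le (fun k => ?_)
    (fun k => ?_) (summable_geometric_of_lt_one (r := (2 : ℝ)⁻¹) (by norm_num) (by norm_num)))
  · split_ifs <;> positivity
  · split_ifs <;> simp

theorem abs_sub_lt_of_frechetDist_lt {k N : ℕ} {ε : ℝ} (hε : 0 < ε) (hk : k ≤ N)
    (h : frechetDist x y < 2⁻¹ ^ N * (ε / (1 + ε))) : |x k - y k| < ε := by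
  contrapose! h
  have hmono : ε / (1 + ε) ≤ |x k - y k| / (1 + |x k - y k|) := by
    rw [div_le_div_iff₀ (by positivity) (by positivity)]
    nlinarith
  calc 2⁻¹ ^ N * (ε / (1 + ε))
      ≤ 2⁻¹ ^ k * (|x k - y k| / (1 + |x k - y k|)) :=
        mul_le_mul (pow_le_pow_of_le_one (by norm_num) (by norm_num) hk) hmono
          (by positivity) (by positivity)
    _ ≤ frechetDist x y := (summable_frechetDist_term x y).le_tsum k fun _ _ => by positivity

end FrechetDist

section SequenceSpace

variable {A : ℕ → Set (ℕ → ℝ)} {K : ℕ → ℕ}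

theorem dense_iUnion_image_funLeft
    (hdense : ∀ (x : ℕ → ℝ) (δ : ℝ), 0 < δ → ∃ n, ∃ a ∈ A n, frechetDist x a < δ) (N : ℕ) :
    Dense (⋃ n, LinearMap.funLeft ℝ ℝ (Fin.val : Fin N → ℕ) '' A n) := by
  refine Metric.dense_iff.2 fun v ε hε => ?_
  obtain ⟨x, rfl⟩ := LinearMap.funLeft_surjective_of_injective ℝ ℝ _ Fin.val_injective v
  obtain ⟨n, a, ha, hxa⟩ := hdense x (2⁻¹ ^ N * (ε / (1 + ε))) (by positivity)
  refine ⟨_, ?_, Set.mem_iUnion.2 ⟨n, a, ha, rfl⟩⟩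
  rw [Metric.mem_ball, dist_comm, dist_pi_lt_iff hε]
  exact fun i => (Real.dist_eq _ _).trans_lt (abs_sub_lt_of_frechetDist_lt hε i.2.le hxa)

theorem exists_level_forall_lt_eq (hmono : Monotone A) (hadd : ∀ n, A n + A n ⊆ A (K n))
    (hsmul : ∀ n (c : ℝ), c • A n ⊆ A n)
    (hdense : ∀ (x : ℕ → ℝ) (δ : ℝ), 0 < δ → ∃ n, ∃ a ∈ A n, frechetDist x a < δ) (N : ℕ) :
    ∃ M, ∀ x : ℕ → ℝ, ∃ a ∈ A M, ∀ k < N, a k = x k := by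
  set π := LinearMap.funLeft ℝ ℝ (Fin.val : Fin N → ℕ)
  have hspan : Submodule.span ℝ (⋃ n, π '' A n) = ⊤ :=
    eq_top_iff.2 fun v _ => (Submodule.closed_of_finiteDimensional _).closure_subset_iff.2
      Submodule.subset_span (dense_iUnion_image_funLeft hdense N v)
  have hne : ∃ n, (π '' A n).Nonempty :=
    let ⟨n, a, ha, _⟩ := hdense 0 1 one_pos
    ⟨n, π a, a, ha, rfl⟩
  obtain ⟨M, hM⟩ := exists_eq_univ_of_span_eq_top (B := fun n => π '' A n)
    (fun _ _ h => Set.image_mono (hmono h))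
    (fun n => (Set.image_add π).symm.subset.trans (Set.image_mono (hadd n)))
    (fun n c => (image_smul_set π c _).symm.subset.trans (Set.image_mono (hsmul n c))) hne hspan
  refine ⟨M, fun x => ?_⟩
  obtain ⟨a, ha, hax⟩ : π x ∈ π '' A M := hM ▸ Set.mem_univ _
  exact ⟨a, ha, fun k hk => congrFun hax ⟨k, hk⟩⟩

theorem exists_level_forall_frechetDist_le (hmono : Monotone A)
    (hadd : ∀ n, A n + A n ⊆ A (K n)) (hsmul : ∀ n (c : ℝ), c • A n ⊆ A n)
    (hdense : ∀ (x : ℕ → ℝ) (δ : ℝ), 0 < δ → ∃ n, ∃ a ∈ A n, frechetDist x a < δ)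
    {ε : ℝ} (hε : 0 < ε) : ∃ M, ∀ x, ∃ a ∈ A M, frechetDist x a ≤ ε := by
  obtain ⟨N, hN⟩ := exists_pow_lt_of_lt_one (half_pos hε) (by norm_num : (2 : ℝ)⁻¹ < 1)
  obtain ⟨M, hM⟩ := exists_level_forall_lt_eq hmono hadd hsmul hdense N
  refine ⟨M, fun x => ?_⟩
  obtain ⟨a, ha, hax⟩ := hM x
  exact ⟨a, ha, (frechetDist_le_of_forall_lt_eq fun k hk => (hax k hk).symm).trans (by linarith)⟩

end SequenceSpace

theorem all_schemes_fail_shapiro_on_sequence_space_general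
    (d : (ℕ → ℝ) → (ℕ → ℝ) → ℝ)
    (hd : ∀ a b : ℕ → ℝ,
      d a b = ∑' k : ℕ, (2 : ℝ)⁻¹ ^ k * (|a k - b k| / (1 + |a k - b k|)))
    (A : ℕ → Set (ℕ → ℝ)) (hchain : ∀ n, A n ⊆ A (n + 1))
    (K : ℕ → ℕ) (hA1 : ∀ n, A n + A n ⊆ A (K n))
    (hA2 : ∀ (n : ℕ) (c : ℝ), c • A n ⊆ A n)
    (hA3 : ∀ (x : ℕ → ℝ) (δ : ℝ), 0 < δ → ∃ n, ∃ a ∈ A n, d x a < δ) :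
    ∃ δ : ℕ → ℝ, (∀ n, 0 ≤ δ n) ∧ Antitone δ ∧ Tendsto δ atTop (nhds 0) ∧
      ∀ (x : ℕ → ℝ) (n : ℕ), (⨅ a : A n, d x a) ≤ δ n := by
  obtain rfl : d = frechetDist := funext fun a => funext (hd a)
  have hmono : Monotone A := monotone_nat_of_le_succ hchain
  have hbdd : ∀ n x, BddBelow (Set.range fun a : A n => frechetDist x a) :=
    fun _ x => ⟨0, Set.forall_mem_range.2 fun a => frechetDist_nonneg x a⟩
  refine exists_antitone_tendsto_zero_forall_le (C := 2) (fun n x => ⨅ a : A n, frechetDist x a)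
    (fun n x => Real.iInf_nonneg fun a => frechetDist_nonneg x a) (fun n x => ?_) fun ε hε => ?_
  · rcases isEmpty_or_nonempty (A n) with hA | ⟨a, ha⟩
    · rw [Real.iInf_of_isEmpty]
      norm_num
    · exact ciInf_le_of_le (hbdd n x) ⟨a, ha⟩
        (by simpa using frechetDist_le_of_forall_lt_eq (x := x) (y := a) (N := 0) (by simp))
  · obtain ⟨M, hM⟩ := exists_level_forall_frechetDist_le hmono hA1 hA2 hA3 hε
    refine ⟨M, fun n hn x => ?_⟩
    obtain ⟨a, ha, hxa⟩ := hM x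
    exact ciInf_le_of_le (hbdd n x) ⟨a, hmono hn ha⟩ hxa

/-- On the space `s = ℕ → ℝ` of all real sequences with the Fréchet
metric `d(a,b) = Σ_k 2^{-k} |a_k - b_k|/(1 + |a_k - b_k|)`, every approximation scheme
fails Shapiro's theorem uniformly on all of `s`. -/
theorem all_schemes_fail_shapiro_on_sequence_space
    (d : (ℕ → ℝ) → (ℕ → ℝ) → ℝ)
    (hd : ∀ a b : ℕ → ℝ,
      d a b = ∑' k : ℕ, (2 : ℝ)⁻¹ ^ k * (|a k - b k| / (1 + |a k - b k|)))
    (A : ℕ → Set (ℕ → ℝ)) (hchain : ∀ n, A n ⊆ A (n + 1))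
    (K : ℕ → ℕ) (hK : ∀ n, n ≤ K n) (hA1 : ∀ n, A n + A n ⊆ A (K n))
    (hA2 : ∀ (n : ℕ) (c : ℝ), c • A n ⊆ A n)
    (hA3 : ∀ (x : ℕ → ℝ) (δ : ℝ), 0 < δ → ∃ n, ∃ a ∈ A n, d x a < δ) :
    ∃ δ : ℕ → ℝ, (∀ n, 0 ≤ δ n) ∧ Antitone δ ∧ Tendsto δ atTop (nhds 0) ∧
      ∀ (x : ℕ → ℝ) (n : ℕ), (⨅ a : A n, d x a) ≤ δ n :=
  all_schemes_fail_shapiro_on_sequence_space_general d hd A hchain K hA1 hA2 hA3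
end

section
/- Let (X,d) be an F-space with non-decreasing translation-invariant metric and let ℰ(x) = {e_n(x)} be a scale on X. Then the following are equivalent: (i) there exists ε_n ↘ 0 such that for every x ∈ X, e_n(x) = O(ε_n); (ii) there exist ε_n ↘ 0, C > 0, and r_0 > 0 such that e_n(x) ≤ Cε_n for all x ∈ B(0,r_0) and all n. -/
open Filter Metric Topology

/-!
(i) ⇒ (ii) is a Baire category argument. The closed sets `Γ_m = {x | ∀ n, e_n(x) ≤ m ε_n}` cover
`X`, so some `Γ_m` contains a ball `B(x₀, r)`. Writing `y = (x₀ + y) - x₀` and using the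
quasi-triangle inequality of the scale gives `e_{K(n)}(y) ≤ 2 C₂ m ε_n` on `B(0, r)`; reindexing
along a lower inverse of `K` turns this into a bound `e_n(y) ≤ C ε'_n` for a new null sequence
`ε'`. (ii) ⇒ (i): every `x` has a nonzero multiple `c • x` in the ball, and
`e_n(x) ≤ φ(|c⁻¹|) e_n(c • x)`.
-/

def floorInv (K : ℕ → ℕ) (n : ℕ) : ℕ :=
  Nat.findGreatest (fun i => K i ≤ n) n

namespace floorInv

variable {K : ℕ → ℕ}

theorem monotone : Monotone (floorInv K) := fun _ _ hab =>
  Nat.findGreatest_mono (fun _ hi => hi.trans hab) hab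

theorem tendsto_atTop (hK : StrictMono K) : Tendsto (floorInv K) atTop atTop :=
  tendsto_atTop_atTop.2 fun b =>
    ⟨K b, fun _ hn => Nat.le_findGreatest (hK.le_apply.trans hn) hn⟩

theorem apply_le {n : ℕ} (hn : K 0 ≤ n) : K (floorInv K n) ≤ n :=
  Nat.findGreatest_spec (P := fun i => K i ≤ n) (Nat.zero_le n) hn

theorem eq_zero (hK : Monotone K) {n : ℕ} (hn : n < K 0) : floorInv K n = 0 :=
  Nat.findGreatest_eq_zero_iff.2 fun i _ _ hi => (hn.trans_le (hK (Nat.zero_le i))).not_ge hi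

end floorInv

theorem exists_pos_antitone_tendsto_zero_ge {ε : ℕ → ℝ} (hε0 : ∀ n, 0 ≤ ε n) (hε : Antitone ε)
    (hεlim : Tendsto ε atTop (𝓝 0)) :
    ∃ η : ℕ → ℝ, (∀ n, 0 < η n) ∧ Antitone η ∧ Tendsto η atTop (𝓝 0) ∧ ∀ n, ε n ≤ η n := by
  refine ⟨fun n => ε n + 1 / ((n : ℝ) + 1), fun n => by have := hε0 n; positivity,
    hε.add fun _ _ h => Nat.one_div_le_one_div h, ?_, fun n => by simp; positivity⟩
  simpa using hεlim.add tendsto_one_div_add_atTop_nhds_zero_nat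

theorem exists_le_mul_of_le_comp_strictMono {ε : ℕ → ℝ} (hε0 : ∀ n, 0 ≤ ε n) (hε : Antitone ε)
    (hεlim : Tendsto ε atTop (𝓝 0)) {K : ℕ → ℕ} (hK : StrictMono K) (A B : ℝ) :
    ∃ (ε' : ℕ → ℝ) (C : ℝ), (∀ n, 0 ≤ ε' n) ∧ Antitone ε' ∧ Tendsto ε' atTop (𝓝 0) ∧ 0 < C ∧
      ∀ f : ℕ → ℝ, Antitone f → (∀ n, f (K n) ≤ A * ε n) → f 0 ≤ B → ∀ n, f n ≤ C * ε' n := by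
  obtain ⟨η, hη0, hη, hηlim, hεη⟩ := exists_pos_antitone_tendsto_zero_ge hε0 hε hεlim
  set C := max (max A (B / η 0)) 1
  have hAC : A ≤ C := (le_max_left _ _).trans (le_max_left _ _)
  have hBC : B / η 0 ≤ C := (le_max_right _ _).trans (le_max_left _ _)
  have hC : 0 < C := zero_lt_one.trans_le (le_max_right _ _)
  refine ⟨η ∘ floorInv K, C, fun n => (hη0 _).le, hη.comp_monotone floorInv.monotone,
    hηlim.comp (floorInv.tendsto_atTop hK), hC, fun f hf hfK hf0 n => ?_⟩
  rcases le_or_gt (K 0) n with hn | hn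
  · calc f n ≤ f (K (floorInv K n)) := hf (floorInv.apply_le hn)
      _ ≤ A * ε (floorInv K n) := hfK _
      _ ≤ C * ε (floorInv K n) := mul_le_mul_of_nonneg_right hAC (hε0 _)
      _ ≤ C * η (floorInv K n) := mul_le_mul_of_nonneg_left (hεη _) hC.le
  · rw [Function.comp_apply, floorInv.eq_zero hK.monotone hn]
    calc f n ≤ B := (hf (Nat.zero_le n)).trans hf0
      _ = B / η 0 * η 0 := (div_mul_cancel₀ B (hη0 0).ne').symm
      _ ≤ C * η 0 := mul_le_mul_of_nonneg_right hBC (hη0 0).le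

theorem exists_nonempty_interior_setOf_forall_le_mul {X : Type*} [TopologicalSpace X]
    [BaireSpace X] [Nonempty X] {e : ℕ → X → ℝ} (hcont : ∀ n, Continuous (e n)) {ε : ℕ → ℝ}
    (hε0 : ∀ n, 0 ≤ ε n) (hdom : ∀ x, ∃ C : ℝ, ∀ n, e n x ≤ C * ε n) :
    ∃ m : ℕ, (interior {x | ∀ n, e n x ≤ m * ε n}).Nonempty := by
  refine nonempty_interior_of_iUnion_of_closed (fun m => ?_) (Set.eq_univ_of_forall fun x => ?_)
  · simpa only [Set.ofPred_forall] using
      isClosed_iInter fun n => isClosed_le (hcont n) continuous_const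
  · obtain ⟨C, hC⟩ := hdom x
    exact Set.mem_iUnion.2 ⟨⌈C⌉₊, fun n =>
      (hC n).trans (mul_le_mul_of_nonneg_right (Nat.le_ceil C) (hε0 n))⟩

theorem exists_smul_mem_of_mem_nhds_zero {X : Type*} [AddCommGroup X] [Module ℝ X]
    [TopologicalSpace X] [ContinuousSMul ℝ X] {s : Set X} (hs : s ∈ 𝓝 0) (x : X) :
    ∃ c : ℝ, c ≠ 0 ∧ c • x ∈ s := by
  have hcx : ∀ᶠ c : ℝ in 𝓝 0, c • x ∈ s :=
    (continuous_id.smul continuous_const).tendsto' 0 0 (zero_smul ℝ x) hs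
  have hcx' : ∀ᶠ c in 𝓝[≠] (0 : ℝ), c ≠ 0 ∧ c • x ∈ s :=
    eventually_mem_nhdsWithin.and (hcx.filter_mono nhdsWithin_le_nhds)
  exact hcx'.exists

theorem exists_le_mul_of_le_mul_on_nhds_zero {X : Type*} [AddCommGroup X] [Module ℝ X]
    [TopologicalSpace X] [ContinuousSMul ℝ X] {e : ℕ → X → ℝ} {φ : ℝ → ℝ}
    (hnonneg : ∀ n x, 0 ≤ e n x) (hsmul : ∀ n (l : ℝ) (x : X), e n (l • x) ≤ φ |l| * e n x)
    {ε : ℕ → ℝ} {C : ℝ} {s : Set X} (hs : s ∈ 𝓝 0) (hbound : ∀ x ∈ s, ∀ n, e n x ≤ C * ε n)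
    (x : X) : ∃ C' : ℝ, ∀ n, e n x ≤ C' * ε n := by
  obtain ⟨c, hc, hcx⟩ := exists_smul_mem_of_mem_nhds_zero hs x
  refine ⟨max (φ |c⁻¹|) 0 * C, fun n => ?_⟩
  calc e n x = e n (c⁻¹ • c • x) := by rw [inv_smul_smul₀ hc]
    _ ≤ φ |c⁻¹| * e n (c • x) := hsmul n _ _
    _ ≤ max (φ |c⁻¹|) 0 * e n (c • x) := mul_le_mul_of_nonneg_right (le_max_left _ _) (hnonneg _ _)
    _ ≤ max (φ |c⁻¹|) 0 * (C * ε n) := mul_le_mul_of_nonneg_left (hbound _ hcx n) (le_max_right _ _)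
    _ = max (φ |c⁻¹|) 0 * C * ε n := (mul_assoc _ _ _).symm

theorem le_two_mul_of_forall_le_of_forall_add_le {X : Type*} [AddCommGroup X] {e : ℕ → X → ℝ}
    {K : ℕ → ℕ} {C₂ : ℝ} (hC₂ : 0 ≤ C₂)
    (hadd : ∀ n (x y : X), e (K n) (x + y) ≤ C₂ * (e n x + e n y))
    (hsymm : ∀ n (x : X), e n (-x) = e n x) {c : ℕ → ℝ} {x₀ y : X} (hx₀ : ∀ n, e n x₀ ≤ c n)
    (hx₀y : ∀ n, e n (x₀ + y) ≤ c n) (n : ℕ) : e (K n) y ≤ 2 * C₂ * c n :=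
  calc e (K n) y = e (K n) ((x₀ + y) + -x₀) := by rw [add_neg_cancel_comm]
    _ ≤ C₂ * (e n (x₀ + y) + e n x₀) := by rw [← hsymm n x₀]; exact hadd n _ _
    _ ≤ C₂ * (c n + c n) := mul_le_mul_of_nonneg_left (add_le_add (hx₀y n) (hx₀ n)) hC₂
    _ = 2 * C₂ * c n := by ring

theorem exists_le_mul_on_closedBall_of_forall_exists_le_mul {X : Type*} [AddCommGroup X]
    [MetricSpace X] [CompleteSpace X] (hinv : ∀ x y z : X, dist (x + z) (y + z) = dist x y)
    {e : ℕ → X → ℝ} {C₁ C₂ : ℝ} (hC₁ : 0 ≤ C₁) (hC₂ : 0 ≤ C₂) {K : ℕ → ℕ} (hK : StrictMono K)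
    (hbound : ∀ n x, e n x ≤ C₁ * dist x 0) (hanti : ∀ x, Antitone fun n => e n x)
    (hcont : ∀ n, Continuous (e n)) (hadd : ∀ n (x y : X), e (K n) (x + y) ≤ C₂ * (e n x + e n y))
    (hsymm : ∀ n (x : X), e n (-x) = e n x) {ε : ℕ → ℝ} (hε0 : ∀ n, 0 ≤ ε n) (hε : Antitone ε)
    (hεlim : Tendsto ε atTop (𝓝 0)) (hdom : ∀ x, ∃ C : ℝ, ∀ n, e n x ≤ C * ε n) :
    ∃ (ε' : ℕ → ℝ) (C r₀ : ℝ), (∀ n, 0 ≤ ε' n) ∧ Antitone ε' ∧ Tendsto ε' atTop (𝓝 0) ∧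
      0 < C ∧ 0 < r₀ ∧ ∀ y ∈ closedBall (0 : X) r₀, ∀ n, e n y ≤ C * ε' n := by
  obtain ⟨m, x₀, hx₀⟩ := exists_nonempty_interior_setOf_forall_le_mul hcont hε0 hdom
  obtain ⟨r, hr, hball⟩ := Metric.mem_nhds_iff.1 (mem_interior_iff_mem_nhds.1 hx₀)
  obtain ⟨ε', C, hε'0, hε', hε'lim, hC, hle⟩ :=
    exists_le_mul_of_le_comp_strictMono hε0 hε hεlim hK (2 * C₂ * m) (C₁ * r)
  refine ⟨ε', C, r / 2, hε'0, hε', hε'lim, hC, half_pos hr, fun y hy => ?_⟩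
  have hyr : dist y 0 < r := (mem_closedBall.1 hy).trans_lt (half_lt_self hr)
  have hx₀y : x₀ + y ∈ ball x₀ r := mem_ball.2 <|
    calc dist (x₀ + y) x₀ = dist (y + x₀) (0 + x₀) := by rw [add_comm, zero_add]
      _ = dist y 0 := hinv y 0 x₀
      _ < r := hyr
  refine hle _ (hanti y) (fun n => ?_) ((hbound 0 y).trans (by gcongr))
  rw [mul_assoc]
  exact le_two_mul_of_forall_le_of_forall_add_le hC₂ hadd hsymm (hball (mem_ball_self hr))
    (hball hx₀y) n

theorem scale_pointwise_iff_uniform_domination_general {X : Type*} [AddCommGroup X] [Module ℝ X]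
    [MetricSpace X] [ContinuousSMul ℝ X] [CompleteSpace X]
    (hinv : ∀ x y z : X, dist (x + z) (y + z) = dist x y)
    (e : ℕ → X → ℝ) (C₁ C₂ : ℝ) (hC₁ : 0 < C₁) (hC₂ : 0 < C₂)
    (K : ℕ → ℕ) (hKmono : StrictMono K) (φ : ℝ → ℝ)
    (hnonneg : ∀ n x, 0 ≤ e n x)
    (hbound : ∀ n x, e n x ≤ C₁ * dist x 0)
    (hanti : ∀ n x, e (n + 1) x ≤ e n x)
    (hcont : ∀ n, Continuous (e n))
    (hadd : ∀ n (x y : X), e (K n) (x + y) ≤ C₂ * (e n x + e n y))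
    (hsmul : ∀ n (l : ℝ) (x : X), e n (l • x) ≤ φ |l| * e n x)
    (hsymm : ∀ n (x : X), e n (-x) = e n x) :
    (∃ ε : ℕ → ℝ, (∀ n, 0 ≤ ε n) ∧ Antitone ε ∧ Tendsto ε atTop (nhds 0) ∧
        ∀ x : X, ∃ C : ℝ, ∀ n, e n x ≤ C * ε n) ↔
      (∃ (ε : ℕ → ℝ) (C r₀ : ℝ), (∀ n, 0 ≤ ε n) ∧ Antitone ε ∧
        Tendsto ε atTop (nhds 0) ∧ 0 < C ∧ 0 < r₀ ∧
        ∀ x ∈ closedBall (0 : X) r₀, ∀ n, e n x ≤ C * ε n) := by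
  constructor
  · rintro ⟨ε, hε0, hε, hεlim, hdom⟩
    exact exists_le_mul_on_closedBall_of_forall_exists_le_mul hinv hC₁.le hC₂.le hKmono hbound
      (fun x => antitone_nat_of_succ_le fun n => hanti n x) hcont hadd hsymm hε0 hε hεlim hdom
  · rintro ⟨ε, C, r₀, hε0, hε, hεlim, -, hr₀, hball⟩
    exact ⟨ε, hε0, hε, hεlim,
      exists_le_mul_of_le_mul_on_nhds_zero hnonneg hsmul (closedBall_mem_nhds 0 hr₀) hball⟩

/-- For a scale `ℰ(x) = {e_n(x)}` on an F-space with non-decreasing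
translation-invariant metric, the scale is dominated pointwise by a null sequence (up to
constants depending on the point) iff it is uniformly dominated on some ball `B(0,r₀)`. -/
theorem scale_pointwise_iff_uniform_domination {X : Type*} [AddCommGroup X] [Module ℝ X]
    [MetricSpace X] [IsTopologicalAddGroup X] [ContinuousSMul ℝ X] [CompleteSpace X]
    (hinv : ∀ x y z : X, dist (x + z) (y + z) = dist x y)
    (hnd : ∀ (α : ℝ) (x : X), 0 ≤ α → α ≤ 1 → dist (α • x) 0 ≤ dist x 0)
    (e : ℕ → X → ℝ) (C₁ C₂ : ℝ) (hC₁ : 0 < C₁) (hC₂ : 0 < C₂)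
    (K : ℕ → ℕ) (hKmono : StrictMono K) (φ : ℝ → ℝ)
    (hnonneg : ∀ n x, 0 ≤ e n x)
    (hbound : ∀ n x, e n x ≤ C₁ * dist x 0)
    (hanti : ∀ n x, e (n + 1) x ≤ e n x)
    (hcont : ∀ n, Continuous (e n))
    (hadd : ∀ n (x y : X), e (K n) (x + y) ≤ C₂ * (e n x + e n y))
    (hsmul : ∀ n (l : ℝ) (x : X), e n (l • x) ≤ φ |l| * e n x)
    (hsymm : ∀ n (x : X), e n (-x) = e n x) :
    (∃ ε : ℕ → ℝ, (∀ n, 0 ≤ ε n) ∧ Antitone ε ∧ Tendsto ε atTop (nhds 0) ∧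
        ∀ x : X, ∃ C : ℝ, ∀ n, e n x ≤ C * ε n) ↔
      (∃ (ε : ℕ → ℝ) (C r₀ : ℝ), (∀ n, 0 ≤ ε n) ∧ Antitone ε ∧
        Tendsto ε atTop (nhds 0) ∧ 0 < C ∧ 0 < r₀ ∧
        ∀ x ∈ closedBall (0 : X) r₀, ∀ n, e n x ≤ C * ε n) :=
  scale_pointwise_iff_uniform_domination_general hinv e C₁ C₂ hC₁ hC₂ K hKmono φ hnonneg hbound
    hanti hcont hadd hsmul hsymm
end

section
/- Let (X,d) be an infinite compact metric space and consider on C(X) (with the sup norm) the scale Ω(f) = {ω(f, 1/(1+n))}_{n≥0}, where ω(f,δ) = sup_{d(x,y)≤δ} |f(x)-f(y)| is the modulus of continuity. Then Ω satisfies Shapiro's theorem on C(X): for every sequence ε_n ↘ 0 there exists f ∈ C(X) with ω(f,1/(1+n)) → 0 and ω(f,1/(1+n)) ≠ O(ε_n). -/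
/-!
Every continuous `f` on a compact space is uniformly continuous, so `ω(f, 1/(1+n)) → 0`.
For the lower bound take an accumulation point `p` of `X` and points `yₙ ≠ p` with
`d(yₙ, p) ≤ 1/(1+n)`, and set `bₙ = √εₙ + 1/(1+n)`, which decreases to `0` but is not `O(εₙ)`.
The function `f = ∑ₖ (bₖ - bₖ₊₁) min(1, d(·, p)/ρₖ)`, where `ρₖ ≤ d(yₖ, p)` decreases,
vanishes at `p` and satisfies `f(yₙ) ≥ ∑_{k ≥ n} (bₖ - bₖ₊₁) = bₙ`, so `ω(f, 1/(1+n)) ≥ bₙ`.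
-/

open Filter

/-- The modulus of continuity `ω(f,δ) = sup_{d(x,y) ≤ δ} |f x - f y|`. -/
noncomputable def modulusOfContinuity {X : Type*} [MetricSpace X] (f : X → ℝ) (δ : ℝ) : ℝ :=
  sSup {v : ℝ | ∃ x y : X, dist x y ≤ δ ∧ v = |f x - f y|}

open Topology

section ModulusOfContinuity

variable {X : Type*} [MetricSpace X]

lemma modulusOfContinuity_nonneg (f : X → ℝ) (δ : ℝ) : 0 ≤ modulusOfContinuity f δ :=
  Real.sSup_nonneg (by rintro _ ⟨x, y, -, rfl⟩; exact abs_nonneg _)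

lemma modulusOfContinuity_le {f : X → ℝ} {δ η : ℝ} (hη : 0 ≤ η)
    (h : ∀ x y, dist x y ≤ δ → |f x - f y| ≤ η) : modulusOfContinuity f δ ≤ η :=
  Real.sSup_le (by rintro _ ⟨x, y, hxy, rfl⟩; exact h x y hxy) hη

lemma abs_sub_le_modulusOfContinuity {f : X → ℝ} (hf : Bornology.IsBounded (Set.range f))
    {δ : ℝ} {x y : X} (hxy : dist x y ≤ δ) : |f x - f y| ≤ modulusOfContinuity f δ := by
  refine le_csSup ⟨Metric.diam (Set.range f), ?_⟩ ⟨x, y, hxy, rfl⟩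
  rintro _ ⟨x', y', -, rfl⟩
  rw [← Real.dist_eq]
  exact Metric.dist_le_diam_of_mem hf (Set.mem_range_self x') (Set.mem_range_self y')

lemma UniformContinuous.tendsto_modulusOfContinuity {f : X → ℝ} (hf : UniformContinuous f) :
    Tendsto (modulusOfContinuity f) (𝓝 0) (𝓝 0) := by
  refine Metric.tendsto_nhds_nhds.2 fun η hη => ?_
  obtain ⟨δ, hδ, hf⟩ := Metric.uniformContinuous_iff.1 hf (η / 2) (half_pos hη)
  refine ⟨δ, hδ, fun t ht => ?_⟩
  rw [Real.dist_eq, sub_zero, abs_of_nonneg (modulusOfContinuity_nonneg f t)]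
  refine (modulusOfContinuity_le (half_pos hη).le fun x y hxy => ?_).trans_lt (half_lt_self hη)
  rw [← Real.dist_eq]
  rw [Real.dist_0_eq_abs] at ht
  exact (hf (hxy.trans_lt ((le_abs_self t).trans_lt ht))).le

end ModulusOfContinuity

lemma Antitone.hasSum_sub_succ {b : ℕ → ℝ} {l : ℝ} (hb : Antitone b)
    (hl : Tendsto b atTop (𝓝 l)) : HasSum (fun n => b n - b (n + 1)) (b 0 - l) := by
  rw [hasSum_iff_tendsto_nat_of_nonneg fun n => sub_nonneg.2 (hb n.le_succ)]
  simpa only [Finset.sum_range_sub'] using tendsto_const_nhds.sub hl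

lemma exists_antitone_pos_le {r : ℕ → ℝ} (hr : ∀ k, 0 < r k) :
    ∃ ρ : ℕ → ℝ, Antitone ρ ∧ (∀ k, 0 < ρ k) ∧ ∀ k, ρ k ≤ r k := by
  refine ⟨fun k => (Finset.range (k + 1)).inf' Finset.nonempty_range_add_one r,
    fun m n hmn => ?_, fun k => ?_, fun k => ?_⟩
  · exact Finset.inf'_mono r (Finset.range_subset_range.2 (by omega)) _
  · exact (Finset.lt_inf'_iff _).2 fun i _ => hr i
  · exact Finset.inf'_le r (Finset.self_mem_range_succ k)

lemma exists_continuous_eq_zero_le_of_le_dist {X : Type*} [PseudoMetricSpace X] (p : X)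
    {b : ℕ → ℝ} (hb : Antitone b) (hb0 : Tendsto b atTop (𝓝 0))
    {ρ : ℕ → ℝ} (hρ : Antitone ρ) (hρ0 : ∀ k, 0 < ρ k) :
    ∃ f : C(X, ℝ), f p = 0 ∧ ∀ k x, ρ k ≤ dist x p → b k ≤ f x := by
  set a : ℕ → ℝ := fun j => b j - b (j + 1)
  have ha0 : ∀ j, 0 ≤ a j := fun j => sub_nonneg.2 (hb j.le_succ)
  have ha : Summable a := (hb.hasSum_sub_succ hb0).summable
  set g : ℕ → X → ℝ := fun j x => a j * min 1 (dist x p / ρ j)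
  have hg0 : ∀ j x, 0 ≤ g j x := fun j x =>
    mul_nonneg (ha0 j) (le_min zero_le_one (div_nonneg dist_nonneg (hρ0 j).le))
  have hga : ∀ j x, g j x ≤ a j := fun j x => mul_le_of_le_one_right (ha0 j) (min_le_left _ _)
  have hgs : ∀ x, Summable (g · x) := fun x => ha.of_nonneg_of_le (hg0 · x) (hga · x)
  have hg : ∀ j, Continuous (g j) := fun j => by fun_prop
  refine ⟨⟨fun x => ∑' j, g j x, continuous_tsum hg ha fun j x => ?_⟩, by simp [g], ?_⟩
  · rw [Real.norm_of_nonneg (hg0 j x)]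
    exact hga j x
  intro k x hx
  -- beyond index `k` every term is saturated, and those terms telescope to `b k`
  have htail : ∑' j, g (j + k) x = b k := by
    have hsat : ∀ j, g (j + k) x = b (j + k) - b (j + 1 + k) := fun j => by
      have : 1 ≤ dist x p / ρ (j + k) :=
        (one_le_div (hρ0 _)).2 ((hρ (Nat.le_add_left k j)).trans hx)
      simp only [g, a, min_eq_left this, mul_one, Nat.add_right_comm j 1 k]
    have hbk : Antitone (fun n => b (n + k)) := fun m n hmn => hb (Nat.add_le_add_right hmn k)
    simpa [hsat] using (hbk.hasSum_sub_succ (hb0.comp (tendsto_add_atTop_nat k))).tsum_eq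
  calc b k = ∑' j, g (j + k) x := htail.symm
    _ ≤ ∑ j ∈ Finset.range k, g j x + ∑' j, g (j + k) x :=
      le_add_of_nonneg_left (Finset.sum_nonneg fun j _ => hg0 j x)
    _ = ∑' j, g j x := (hgs x).sum_add_tsum_nat_add k

lemma not_exists_le_mul_of_sqrt_lt {ε b : ℕ → ℝ} (hε0 : ∀ n, 0 ≤ ε n)
    (hε : Tendsto ε atTop (𝓝 0)) (hb : ∀ n, √(ε n) < b n) : ¬ ∃ C, ∀ n, b n ≤ C * ε n := by
  rintro ⟨C, hC⟩
  have hsqrt : Tendsto (fun n => max C 1 * √(ε n)) atTop (𝓝 0) := by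
    simpa using (hε.sqrt.const_mul (max C 1))
  obtain ⟨n, hn⟩ := (hsqrt.eventually (gt_mem_nhds one_pos)).exists
  have hCD : C * ε n ≤ max C 1 * ε n := mul_le_mul_of_nonneg_right (le_max_left C 1) (hε0 n)
  have hsqrt_le : max C 1 * ε n ≤ √(ε n) :=
    calc max C 1 * ε n = max C 1 * √(ε n) * √(ε n) := by
          rw [mul_assoc, Real.mul_self_sqrt (hε0 n)]
      _ ≤ √(ε n) := mul_le_of_le_one_left (Real.sqrt_nonneg _) hn.le
  linarith [hC n, hb n]

/-- On an infinite compact metric space `X`, the scale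
`Ω(f) = {ω(f, 1/(1+n))}` on `C(X)` satisfies Shapiro's theorem: for every `ε_n ↘ 0`
there is `f ∈ C(X)` with `ω(f, 1/(1+n)) → 0` and `ω(f, 1/(1+n)) ≠ O(ε_n)`. -/
theorem modulus_of_continuity_scale_satisfies_shapiro
    {X : Type*} [MetricSpace X] [CompactSpace X] (hX : Set.Infinite (Set.univ : Set X))
    (ε : ℕ → ℝ) (hεnonneg : ∀ n, 0 ≤ ε n) (hεanti : Antitone ε)
    (hεlim : Tendsto ε atTop (nhds 0)) :
    ∃ f : C(X, ℝ),
      Tendsto (fun n : ℕ => modulusOfContinuity f (1 / (1 + (n : ℝ)))) atTop (nhds 0) ∧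
      ¬ ∃ C : ℝ, ∀ n : ℕ, modulusOfContinuity f (1 / (1 + (n : ℝ))) ≤ C * ε n := by
  obtain ⟨p, hp⟩ := hX.exists_accPt_principal
  have hδ : ∀ n : ℕ, (0 : ℝ) < 1 / (1 + n) := fun n => by positivity
  choose y hy hyp using fun n =>
    accPt_iff_nhds.1 hp _ (Metric.closedBall_mem_nhds p (hδ n))
  obtain ⟨ρ, hρ, hρ0, hρy⟩ := exists_antitone_pos_le fun n => dist_pos.2 (hyp n)
  set b : ℕ → ℝ := fun n => √(ε n) + 1 / (1 + n)
  have hb : Antitone b := fun m n hmn => add_le_add (Real.sqrt_le_sqrt (hεanti hmn))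
    (one_div_le_one_div_of_le (by positivity) (by gcongr))
  have hδ0 : Tendsto (fun n : ℕ => (1 : ℝ) / (1 + n)) atTop (𝓝 0) := by
    simpa only [add_comm] using tendsto_one_div_add_atTop_nhds_zero_nat
  have hb0 : Tendsto b atTop (𝓝 0) := by
    simpa only [Real.sqrt_zero, add_zero] using hεlim.sqrt.add hδ0
  obtain ⟨f, hfp, hf⟩ := exists_continuous_eq_zero_le_of_le_dist p hb hb0 hρ hρ0
  refine ⟨f, (CompactSpace.uniformContinuous_of_continuous f.continuous).tendsto_modulusOfContinuity
    |>.comp hδ0, ?_⟩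
  refine fun hO => not_exists_le_mul_of_sqrt_lt hεnonneg hεlim (b := b)
    (fun n => lt_add_of_pos_right _ (hδ n)) (hO.imp fun C hC n => ?_)
  calc b n ≤ f (y n) - f p := by rw [hfp, sub_zero]; exact hf n (y n) (hρy n)
    _ ≤ |f (y n) - f p| := le_abs_self _
    _ ≤ modulusOfContinuity f (1 / (1 + n)) := abs_sub_le_modulusOfContinuity
      (isCompact_range f.continuous).isBounded (Metric.mem_closedBall.1 (hy n).1)
    _ ≤ C * ε n := hC n
end

section
/- Let (X,ρ) be an F-space and (Y,d) a metric vector space with non-decreasing translation-invariant metric. Let T, T_n: X → Y be continuous linear operators. Then the following are equivalent: (i) T_n converges pointwise to T but does not converge almost arbitrarily slowly to T; (ii) there exist a sequence ε_n ↘ 0 and r_0 > 0 such that (T_n − T)(B_ρ(0,r_0)) ⊆ B_d(0,ε_n) for all n. -/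
open Filter Metric Topology

/-! If `T_n → T` is not almost arbitrarily slow, some `ε_n ↘ 0` eventually exceeds
`d(T_n x, T x)` for every `x`, so the closed sets `Δ_m = {x | ∀ n, d(T_n x, T x) ≤ m ε_n}` cover
`X`. By Baire some `Δ_m` contains a translate `x₀ + U` of a neighbourhood `U` of `0`, and
additivity turns this into the uniform bound `2 m ε_n` on `U`. Conversely, a bound `ε_n` on a
ball spreads to every `x` by scaling (`t • x` lies in the ball for small `t > 0`, and scaling by
`1/t` costs a factor `⌈1/t⌉`), so `d(T_n x, T x) = O(ε_n)` for all `x`, and every such sequence is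
eventually beaten by the slower rate `√ε_n + 1/(n+1)`. -/

section RealSequences

variable {ε a : ℕ → ℝ}

lemma pos_of_antitone_of_finite_setOf_le (hε : Antitone ε) (ha : ∀ n, 0 ≤ a n)
    (h : {n | ε n ≤ a n}.Finite) (n : ℕ) : 0 < ε n := by
  by_contra! hn
  exact (Set.Ici_infinite n).mono (fun k (hk : n ≤ k) => (hε hk).trans (hn.trans (ha k))) h

lemma exists_nat_mul_bound_of_finite_setOf_le (hε : Antitone ε) (ha : ∀ n, 0 ≤ a n)
    (h : {n | ε n ≤ a n}.Finite) : ∃ m : ℕ, ∀ n, a n ≤ m * ε n := by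
  obtain ⟨C, hC⟩ := (h.image fun n => a n / ε n).bddAbove
  obtain ⟨m, hm⟩ := exists_nat_ge (max C 1)
  refine ⟨m, fun n => ?_⟩
  have hεn := pos_of_antitone_of_finite_setOf_le hε ha h n
  by_cases hn : ε n ≤ a n
  · have : a n / ε n ≤ m := (hC ⟨n, hn, rfl⟩).trans ((le_max_left _ _).trans hm)
    rwa [div_le_iff₀ hεn] at this
  · calc a n ≤ ε n := (not_le.1 hn).le
      _ ≤ m * ε n := le_mul_of_one_le_left hεn.le ((le_max_right _ _).trans hm)

lemma exists_antitone_tendsto_zero_eventually_mul_lt (hε0 : ∀ n, 0 ≤ ε n) (hε : Antitone ε)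
    (hεt : Tendsto ε atTop (𝓝 0)) :
    ∃ ε' : ℕ → ℝ, (∀ n, 0 ≤ ε' n) ∧ Antitone ε' ∧ Tendsto ε' atTop (𝓝 0) ∧
      ∀ C : ℝ, ∀ᶠ n in atTop, C * ε n < ε' n := by
  refine ⟨fun n => √(ε n) + 1 / (n + 1), fun n => by positivity, ?_, ?_, fun C => ?_⟩
  · intro k l hkl
    dsimp only
    gcongr
    exact hε hkl
  · simpa using hεt.sqrt.add tendsto_one_div_add_atTop_nhds_zero_nat
  · have hsmall : ∀ᶠ n in atTop, C * √(ε n) < 1 :=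
      Tendsto.eventually_lt_const one_pos (by simpa using hεt.sqrt.const_mul C)
    filter_upwards [hsmall] with n hn
    calc C * ε n = C * √(ε n) * √(ε n) := by rw [mul_assoc, Real.mul_self_sqrt (hε0 n)]
      _ ≤ √(ε n) := mul_le_of_le_one_left (Real.sqrt_nonneg _) hn.le
      _ < √(ε n) + 1 / (n + 1) := lt_add_of_pos_right _ (by positivity)

end RealSequences

namespace IsIsometricVAdd

variable {Y : Type*} [AddCommGroup Y] [PseudoMetricSpace Y]

lemma of_dist_add_right_s19 (h : ∀ x y z : Y, dist (x + z) (y + z) = dist x y) :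
    IsIsometricVAdd Y Y :=
  ⟨fun c => Isometry.of_dist_eq fun x y => by simpa only [vadd_eq_add, add_comm c] using h x y c⟩

variable [IsIsometricVAdd Y Y]

lemma dist_eq_dist_sub_zero (u v : Y) : dist u v = dist (u - v) 0 := by
  rw [← dist_sub_right u v v, sub_self]

lemma dist_add_add_le_s19 (a₁ a₂ b₁ b₂ : Y) :
    dist (a₁ + a₂) (b₁ + b₂) ≤ dist a₁ b₁ + dist a₂ b₂ :=
  calc dist (a₁ + a₂) (b₁ + b₂) ≤ dist (a₁ + a₂) (b₁ + a₂) + dist (b₁ + a₂) (b₁ + b₂) :=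
        dist_triangle _ _ _
    _ = dist a₁ b₁ + dist a₂ b₂ := by rw [dist_add_right, dist_add_left]

lemma dist_le_dist_add_add_add_dist (a₁ a₂ b₁ b₂ : Y) :
    dist a₂ b₂ ≤ dist (a₁ + a₂) (b₁ + b₂) + dist a₁ b₁ := by
  simpa using dist_add_add_le_s19 (a₁ + a₂) (-a₁) (b₁ + b₂) (-b₁)

lemma dist_nsmul_le (n : ℕ) (u v : Y) : dist (n • u) (n • v) ≤ n * dist u v := by
  induction n with
  | zero => simp
  | succ k ih =>
    calc dist ((k + 1) • u) ((k + 1) • v) ≤ dist (k • u) (k • v) + dist u v := by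
          simpa only [succ_nsmul] using dist_add_add_le_s19 (k • u) u (k • v) v
      _ ≤ (k + 1 : ℕ) * dist u v := by push_cast; linarith

variable [Module ℝ Y] (hnd : ∀ (α : ℝ) (y : Y), 0 ≤ α → α ≤ 1 → dist (α • y) 0 ≤ dist y 0)
include hnd

lemma dist_smul_le_of_le_one {α : ℝ} (hα₀ : 0 ≤ α) (hα₁ : α ≤ 1) (u v : Y) :
    dist (α • u) (α • v) ≤ dist u v := by
  rw [dist_eq_dist_sub_zero, dist_eq_dist_sub_zero u, ← smul_sub]
  exact hnd α _ hα₀ hα₁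

lemma dist_smul_le_ceil_mul {c : ℝ} (hc : 0 ≤ c) (u v : Y) :
    dist (c • u) (c • v) ≤ ⌈c⌉₊ * dist u v := by
  rcases hc.eq_or_lt with rfl | hc
  · simp
  have hm : (0 : ℝ) < ⌈c⌉₊ := Nat.cast_pos.2 (Nat.ceil_pos.2 hc)
  have hsplit : ∀ w : Y, c • w = (c / ⌈c⌉₊) • (⌈c⌉₊ • w) := fun w => by
    rw [← Nat.cast_smul_eq_nsmul ℝ, smul_smul, div_mul_cancel₀ _ hm.ne']
  rw [hsplit u, hsplit v]
  exact (dist_smul_le_of_le_one hnd (by positivity)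
    ((div_le_one hm).2 (Nat.le_ceil c)) _ _).trans (dist_nsmul_le _ _ _)

end IsIsometricVAdd

open IsIsometricVAdd

section OperatorSequences

variable {X Y F : Type*} [AddCommGroup Y] [PseudoMetricSpace Y] [IsIsometricVAdd Y Y]
  [FunLike F X Y] {A : ℕ → F} {B : F} {ε : ℕ → ℝ}

theorem exists_nhds_zero_forall_dist_le_of_forall_exists [AddMonoid X] [TopologicalSpace X]
    [ContinuousAdd X] [BaireSpace X] [AddMonoidHomClass F X Y] [ContinuousMapClass F X Y]
    (h : ∀ x, ∃ m : ℕ, ∀ n, dist (A n x) (B x) ≤ m * ε n) :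
    ∃ m : ℕ, ∃ U ∈ 𝓝 (0 : X), ∀ n, ∀ x ∈ U, dist (A n x) (B x) ≤ m * ε n := by
  set Δ : ℕ → Set X := fun m => ⋂ n, {x | dist (A n x) (B x) ≤ m * ε n}
  have hΔ : ∀ m, IsClosed (Δ m) := fun m =>
    isClosed_iInter fun n => isClosed_le (by fun_prop) continuous_const
  obtain ⟨m, x₀, hx₀⟩ := nonempty_interior_of_iUnion_of_closed hΔ
    (Set.iUnion_eq_univ_iff.2 fun x => (h x).imp fun _ hm => Set.mem_iInter.2 hm)
  have hU : (x₀ + ·) ⁻¹' interior (Δ m) ∈ 𝓝 0 :=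
    (continuous_const_add x₀).continuousAt.preimage_mem_nhds
      (by simpa using isOpen_interior.mem_nhds hx₀)
  refine ⟨2 * m, _, hU, fun n x hx => ?_⟩
  have h₀ := Set.mem_iInter.1 (interior_subset hx₀) n
  have h₁ := Set.mem_iInter.1 (interior_subset (s := Δ m) hx) n
  calc dist (A n x) (B x) ≤ dist (A n x₀ + A n x) (B x₀ + B x) + dist (A n x₀) (B x₀) :=
        dist_le_dist_add_add_add_dist _ _ _ _
    _ ≤ m * ε n + m * ε n := by
        rw [← map_add, ← map_add]
        exact add_le_add h₁ h₀
    _ = (2 * m : ℕ) * ε n := by push_cast; ring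

theorem exists_forall_dist_le_of_forall_mem_nhds_zero [AddCommMonoid X] [Module ℝ X]
    [TopologicalSpace X] [ContinuousSMul ℝ X] [Module ℝ Y] [LinearMapClass F ℝ X Y]
    (hnd : ∀ (α : ℝ) (y : Y), 0 ≤ α → α ≤ 1 → dist (α • y) 0 ≤ dist y 0)
    {U : Set X} (hU : U ∈ 𝓝 0) (hAB : ∀ n, ∀ x ∈ U, dist (A n x) (B x) ≤ ε n) (x : X) :
    ∃ m : ℕ, ∀ n, dist (A n x) (B x) ≤ m * ε n := by
  have hsmul : Tendsto (fun t : ℝ => t • x) (𝓝[>] 0) (𝓝 0) :=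
    ((continuous_id.smul continuous_const).tendsto' (0 : ℝ) _ (zero_smul ℝ x)).mono_left
      nhdsWithin_le_nhds
  obtain ⟨t, htU, ht⟩ := ((hsmul.eventually_mem hU).and self_mem_nhdsWithin).exists
  refine ⟨⌈t⁻¹⌉₊, fun n => ?_⟩
  calc dist (A n x) (B x) = dist (t⁻¹ • A n (t • x)) (t⁻¹ • B (t • x)) := by
        simp only [map_smul, smul_smul, inv_mul_cancel₀ (ne_of_gt ht), one_smul]
    _ ≤ ⌈t⁻¹⌉₊ * dist (A n (t • x)) (B (t • x)) :=
        dist_smul_le_ceil_mul hnd (inv_nonneg.2 (le_of_lt ht)) _ _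
    _ ≤ ⌈t⁻¹⌉₊ * ε n := by
        gcongr
        exact hAB n _ htU

end OperatorSequences

theorem pointwise_not_aas_iff_uniform_on_ball_general
    {X : Type*} [AddCommGroup X] [Module ℝ X] [MetricSpace X]
    [IsTopologicalAddGroup X] [ContinuousSMul ℝ X] [CompleteSpace X]
    {Y : Type*} [AddCommGroup Y] [Module ℝ Y] [MetricSpace Y]
    (hinvY : ∀ x y z : Y, dist (x + z) (y + z) = dist x y)
    (hndY : ∀ (α : ℝ) (y : Y), 0 ≤ α → α ≤ 1 → dist (α • y) 0 ≤ dist y 0)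
    (T : X →L[ℝ] Y) (Tn : ℕ → X →L[ℝ] Y) :
    ((∀ x : X, Tendsto (fun n => Tn n x) atTop (nhds (T x))) ∧
      ¬ ((∀ x : X, Tendsto (fun n => Tn n x) atTop (nhds (T x))) ∧
        (∀ ε : ℕ → ℝ, (∀ n, 0 ≤ ε n) → Antitone ε → Tendsto ε atTop (nhds 0) →
          ∃ x : X, {n : ℕ | ε n ≤ dist (Tn n x) (T x)}.Infinite))) ↔
    (∃ (ε : ℕ → ℝ) (r₀ : ℝ), (∀ n, 0 ≤ ε n) ∧ Antitone ε ∧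
      Tendsto ε atTop (nhds 0) ∧ 0 < r₀ ∧
      ∀ n : ℕ, ∀ x ∈ closedBall (0 : X) r₀, Tn n x - T x ∈ closedBall (0 : Y) (ε n)) := by
  have := IsIsometricVAdd.of_dist_add_right_s19 hinvY
  have hball : ∀ n x r, Tn n x - T x ∈ closedBall (0 : Y) r ↔ dist (Tn n x) (T x) ≤ r :=
    fun n x r => by rw [mem_closedBall, dist_eq_dist_sub_zero (Tn n x)]
  constructor
  · rintro ⟨hpt, hnaas⟩
    push Not at hnaas
    obtain ⟨ε, hε0, hεa, hεt, hfin⟩ := hnaas hpt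
    obtain ⟨m, U, hU, hmU⟩ := exists_nhds_zero_forall_dist_le_of_forall_exists (A := Tn) (B := T)
      fun x => exists_nat_mul_bound_of_finite_setOf_le hεa (fun _ => dist_nonneg) (hfin x)
    obtain ⟨r, hr, hrU⟩ := nhds_basis_closedBall.mem_iff.1 hU
    refine ⟨fun n => m * ε n, r, fun n => mul_nonneg m.cast_nonneg (hε0 n),
      hεa.const_mul m.cast_nonneg, by simpa using hεt.const_mul (m : ℝ), hr,
      fun n x hx => (hball n x _).2 (hmU n x (hrU hx))⟩
  · rintro ⟨ε, r, hε0, hεa, hεt, hr, hε⟩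
    have hrate := exists_forall_dist_le_of_forall_mem_nhds_zero hndY (closedBall_mem_nhds 0 hr)
      fun n x hx => (hball n x _).1 (hε n x hx)
    have hpt : ∀ x, Tendsto (fun n => Tn n x) atTop (𝓝 (T x)) := fun x => by
      obtain ⟨m, hm⟩ := hrate x
      exact tendsto_iff_dist_tendsto_zero.2
        (squeeze_zero (fun _ => dist_nonneg) hm (by simpa using hεt.const_mul (m : ℝ)))
    refine ⟨hpt, fun ⟨_, haas⟩ => ?_⟩
    obtain ⟨ε', hε'0, hε'a, hε't, hεε'⟩ :=
      exists_antitone_tendsto_zero_eventually_mul_lt hε0 hεa hεt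
    obtain ⟨x, hx⟩ := haas ε' hε'0 hε'a hε't
    obtain ⟨m, hm⟩ := hrate x
    obtain ⟨n, hle, hlt⟩ :=
      ((Nat.frequently_atTop_iff_infinite.2 hx).and_eventually (hεε' m)).exists
    exact (hle.trans (hm n)).not_gt hlt

/-- Let `X` be an F-space and `Y` a metric vector space with
non-decreasing translation-invariant metric, and let `T, T_n : X → Y` be continuous
linear operators. Then the following are equivalent:
(i) `T_n → T` pointwise but `T_n` does not converge almost arbitrarily slowly to `T`;
(ii) there exist `ε_n ↘ 0` and `r₀ > 0` with `(T_n − T)(B_ρ(0,r₀)) ⊆ B_d(0,ε_n)`. -/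
theorem pointwise_not_aas_iff_uniform_on_ball
    {X : Type*} [AddCommGroup X] [Module ℝ X] [MetricSpace X]
    [IsTopologicalAddGroup X] [ContinuousSMul ℝ X] [CompleteSpace X]
    (hinvX : ∀ x y z : X, dist (x + z) (y + z) = dist x y)
    {Y : Type*} [AddCommGroup Y] [Module ℝ Y] [MetricSpace Y]
    [IsTopologicalAddGroup Y] [ContinuousSMul ℝ Y]
    (hinvY : ∀ x y z : Y, dist (x + z) (y + z) = dist x y)
    (hndY : ∀ (α : ℝ) (y : Y), 0 ≤ α → α ≤ 1 → dist (α • y) 0 ≤ dist y 0)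
    (T : X →L[ℝ] Y) (Tn : ℕ → X →L[ℝ] Y) :
    ((∀ x : X, Tendsto (fun n => Tn n x) atTop (nhds (T x))) ∧
      ¬ ((∀ x : X, Tendsto (fun n => Tn n x) atTop (nhds (T x))) ∧
        (∀ ε : ℕ → ℝ, (∀ n, 0 ≤ ε n) → Antitone ε → Tendsto ε atTop (nhds 0) →
          ∃ x : X, {n : ℕ | ε n ≤ dist (Tn n x) (T x)}.Infinite))) ↔
    (∃ (ε : ℕ → ℝ) (r₀ : ℝ), (∀ n, 0 ≤ ε n) ∧ Antitone ε ∧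
      Tendsto ε atTop (nhds 0) ∧ 0 < r₀ ∧
      ∀ n : ℕ, ∀ x ∈ closedBall (0 : X) r₀, Tn n x - T x ∈ closedBall (0 : Y) (ε n)) :=
  pointwise_not_aas_iff_uniform_on_ball_general hinvY hndY T Tn
end
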